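/- arXiv:1710.11516 — 7 statements merged into one kernel-verified Lean document; each statement's English description precedes it below -/
import Mathlib

section
/- For any X in F_q^{m×n} with n ≤ m and ρ ∈ (0,1), the size of the rank-metric ball B_R(X,ρ) is at most K_q^{-1} · q^{mn(ρ + ρb − ρ²b)}, where K_q = ∏_{j≥1}(1 − q^{-j}) and b = n/m. -/
/-!
A matrix `M` of rank at most `r` factors as `M = A * B` with `A` of size `m × r` and `B` of size
`r × n` having a right inverse. The group `GL_r(F_q)` acts freely on such factorizations by
`(A, B) ↦ (A g⁻¹, g B)`, so `#{rank ≤ r} · |GL_r(F_q)| ≤ q^{(m+n)r}`. Since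
`|GL_r(F_q)| = q^{r²} ∏_{j=1}^{r} (1 - q^{-j}) ≥ q^{r²} K_q`, this gives
`#{rank ≤ r} ≤ K_q⁻¹ q^{(m+n)r - r²}`. The ball `B_R(X, ρ)` is a translate of the set of matrices of
rank at most `r = ⌊ρn⌋ ≤ ρn`, and `t ↦ (m+n)t - t²` is increasing for `t ≤ n ≤ m`; at `t = ρn` it
equals `mn(ρ + ρb - ρ²b)`.
-/

open Module Finset

theorem LinearMap.exists_surjective_comp_eq_of_finrank_range_le {K V W : Type*} [Field K]
    [AddCommGroup V] [Module K V] [FiniteDimensional K V] [AddCommGroup W] [Module K W]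
    (f : V →ₗ[K] W) {r : ℕ} (hfr : finrank K (range f) ≤ r) (hrV : r ≤ finrank K V) :
    ∃ (g : V →ₗ[K] Fin r → K) (h : (Fin r → K) →ₗ[K] W), Function.Surjective g ∧ h ∘ₗ g = f := by
  have hker : finrank K (Fin (finrank K V - r) → K) ≤ finrank K (ker f) := by
    have := f.finrank_range_add_finrank_ker
    rw [finrank_fin_fun]
    omega
  obtain ⟨i, hi⟩ := finrank_le_iff_exists_linearMap.mp hker
  set U := range ((ker f).subtype ∘ₗ i)
  have hUf : U ≤ ker f := by
    rintro _ ⟨x, rfl⟩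
    exact (i x).2
  have hU : finrank K U = finrank K V - r := by
    rw [finrank_range_of_inj (Subtype.val_injective.comp hi), finrank_fin_fun]
  have hquot : finrank K (V ⧸ U) = finrank K (Fin r → K) := by
    have := U.finrank_quotient_add_finrank
    rw [finrank_fin_fun]
    omega
  let e := LinearEquiv.ofFinrankEq _ _ hquot
  refine ⟨e.toLinearMap ∘ₗ U.mkQ, U.liftQ f hUf ∘ₗ e.symm.toLinearMap,
    e.surjective.comp U.mkQ_surjective, ?_⟩
  ext x
  simp

theorem Matrix.exists_mul_eq_and_mul_eq_one_of_rank_le {K m n : Type*} [Field K]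
    [Fintype m] [Fintype n] (M : Matrix m n K) {r : ℕ}
    (hM : M.rank ≤ r) (hrn : r ≤ Fintype.card n) :
    ∃ (A : Matrix m (Fin r) K) (B : Matrix (Fin r) n K) (C : Matrix n (Fin r) K),
      A * B = M ∧ B * C = 1 := by
  classical
  obtain ⟨g, h, hg, hgh⟩ := M.mulVecLin.exists_surjective_comp_eq_of_finrank_range_le hM
    (by rwa [finrank_fintype_fun_eq_card])
  obtain ⟨s, hs⟩ := g.exists_rightInverse_of_surjective (LinearMap.range_eq_top.mpr hg)
  refine ⟨LinearMap.toMatrix' h, LinearMap.toMatrix' g, LinearMap.toMatrix' s, ?_, ?_⟩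
  · rw [← LinearMap.toMatrix'_comp, hgh, ← Matrix.toLin'_apply', LinearMap.toMatrix'_toLin']
  · rw [← LinearMap.toMatrix'_comp, hs, LinearMap.toMatrix'_id]

theorem Matrix.card_rank_le_mul_card_GL_le {F m n : Type*} [Field F] [Fintype F]
    [Fintype m] [Fintype n] {r : ℕ} (hrn : r ≤ Fintype.card n) :
    Nat.card {M : Matrix m n F // M.rank ≤ r} * Nat.card (GL (Fin r) F) ≤
      Fintype.card F ^ (Fintype.card m * r + r * Fintype.card n) := by
  classical
  choose A B C hAB hBC using fun M : {M : Matrix m n F // M.rank ≤ r} ↦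
    M.1.exists_mul_eq_and_mul_eq_one_of_rank_le M.2 hrn
  have inv_mul_mul (g : GL (Fin r) F) (X : Matrix (Fin r) n F) :
      (↑g⁻¹ : Matrix (Fin r) (Fin r) F) * ((g : Matrix (Fin r) (Fin r) F) * X) = X := by
    rw [← Matrix.mul_assoc, ← Units.val_mul, inv_mul_cancel, Units.val_one, Matrix.one_mul]
  let Φ : {M : Matrix m n F // M.rank ≤ r} × GL (Fin r) F →
      Matrix m (Fin r) F × Matrix (Fin r) n F :=
    fun p ↦ (A p.1 * (↑p.2⁻¹ : Matrix (Fin r) (Fin r) F), (p.2 : Matrix (Fin r) (Fin r) F) * B p.1)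
  have hΦ : Function.Injective Φ := by
    rintro ⟨M, g⟩ ⟨M', g'⟩ h
    obtain ⟨hA, hB⟩ := Prod.mk.inj h
    have hMM' : M = M' := by
      have := congrArg₂ (· * ·) hA hB
      simp only [Matrix.mul_assoc, inv_mul_mul, hAB] at this
      exact Subtype.ext this
    subst hMM'
    have := congrArg (· * C M) hB
    simp only [Matrix.mul_assoc, hBC, Matrix.mul_one] at this
    exact Prod.ext rfl (Units.ext this)
  calc Nat.card {M : Matrix m n F // M.rank ≤ r} * Nat.card (GL (Fin r) F)
      = Nat.card ({M : Matrix m n F // M.rank ≤ r} × GL (Fin r) F) := (Nat.card_prod _ _).symm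
    _ ≤ Nat.card (Matrix m (Fin r) F × Matrix (Fin r) n F) := Nat.card_le_card_of_injective Φ hΦ
    _ = Fintype.card F ^ (Fintype.card m * r + r * Fintype.card n) := by
      simp only [Nat.card_eq_fintype_card, Matrix, Fintype.card_prod, Fintype.card_fun,
        Fintype.card_fin]
      ring

theorem Matrix.card_GL_field_eq_pow_mul_prod (F : Type*) [Field F] [Fintype F] (r : ℕ) :
    (Nat.card (GL (Fin r) F) : ℝ) =
      (Fintype.card F : ℝ) ^ (r * r) * ∏ j ∈ range r, (1 - (Fintype.card F : ℝ)⁻¹ ^ (j + 1)) := by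
  set q := Fintype.card F
  have hq : (q : ℝ) ≠ 0 := by simp [q, Fintype.card_ne_zero]
  have factor (j : ℕ) (hj : j < r) :
      ((q ^ r - q ^ (r - 1 - j) : ℕ) : ℝ) = (q : ℝ) ^ r * (1 - (q : ℝ)⁻¹ ^ (j + 1)) := by
    have hsplit : (q : ℝ) ^ r = (q : ℝ) ^ (r - 1 - j) * (q : ℝ) ^ (j + 1) := by
      rw [← pow_add]; congr 1; omega
    rw [Nat.cast_sub (Nat.pow_le_pow_right Fintype.card_pos (by omega)), Nat.cast_pow, Nat.cast_pow,
      hsplit, mul_one_sub, mul_assoc, ← mul_pow, mul_inv_cancel₀ hq, one_pow, mul_one]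
  rw [Matrix.card_GL_field, Nat.cast_prod,
    Fin.prod_univ_eq_prod_range (fun i ↦ ((q ^ r - q ^ i : ℕ) : ℝ)), ← prod_range_reflect,
    prod_congr rfl fun j hj ↦ factor j (mem_range.mp hj), prod_mul_distrib,
    prod_const, card_range, ← pow_mul]

theorem tprod_one_sub_le_prod_range {f : ℕ → ℝ} (hf0 : ∀ j, 0 ≤ f j) (hf1 : ∀ j, f j ≤ 1)
    (hf : Summable f) (r : ℕ) : ∏' j, (1 - f j) ≤ ∏ j ∈ range r, (1 - f j) := by
  have hmul : Multipliable fun j ↦ 1 - f j := by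
    simp_rw [sub_eq_add_neg]
    exact multipliable_one_add_of_summable (by simpa [abs_of_nonneg (hf0 _)] using hf)
  refine Antitone.le_of_tendsto (antitone_nat_of_succ_le fun k ↦ ?_) hmul.tendsto_prod_tprod_nat r
  rw [prod_range_succ]
  exact mul_le_of_le_one_right (prod_nonneg fun j _ ↦ sub_nonneg.mpr (hf1 j)) (by linarith [hf0 k])

theorem tprod_one_sub_pos {f : ℕ → ℝ} (hf0 : ∀ j, 0 ≤ f j) (hf1 : ∀ j, f j < 1)
    (hf : Summable f) : 0 < ∏' j, (1 - f j) := by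
  refine (tprod_nonneg fun j ↦ sub_nonneg.mpr (hf1 j).le).lt_of_ne' ?_
  simp_rw [sub_eq_add_neg]
  exact tprod_one_add_ne_zero_of_summable (fun j ↦ by linarith [hf1 j])
    (by simpa [abs_of_nonneg (hf0 _)] using hf)

theorem add_mul_floor_sub_sq_le {m n : ℕ} (hnm : n ≤ m) {ρ : ℝ} (hρ0 : 0 ≤ ρ) (hρ1 : ρ ≤ 1) :
    (m + n : ℝ) * ⌊ρ * n⌋₊ - (⌊ρ * n⌋₊ : ℝ) ^ 2 ≤ m * n * (ρ + ρ * (n / m) - ρ ^ 2 * (n / m)) := by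
  have hrρ : (⌊ρ * n⌋₊ : ℝ) ≤ ρ * n := Nat.floor_le (by positivity)
  have hρn : ρ * n ≤ (n : ℝ) := mul_le_of_le_one_left (Nat.cast_nonneg n) hρ1
  have hnm' : (n : ℝ) ≤ m := by exact_mod_cast hnm
  have hmn : (m : ℝ) * n * (ρ + ρ * (n / m) - ρ ^ 2 * (n / m)) =
      (m + n) * (ρ * n) - (ρ * n) ^ 2 := by
    rcases Nat.eq_zero_or_pos m with rfl | hm
    · obtain rfl : n = 0 := Nat.le_zero.mp hnm
      simp
    · field_simp
  rw [hmn]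
  nlinarith

theorem Matrix.card_rank_le_le_inv_tprod_mul_rpow {F m n : Type*} [Field F] [Fintype F]
    [Fintype m] [Fintype n] {r : ℕ} (hrn : r ≤ Fintype.card n) :
    (Nat.card {M : Matrix m n F // M.rank ≤ r} : ℝ) ≤
      (∏' j : ℕ, (1 - (Fintype.card F : ℝ)⁻¹ ^ (j + 1)))⁻¹ *
        (Fintype.card F : ℝ) ^ ((Fintype.card m + Fintype.card n : ℝ) * r - r ^ 2) := by
  set q := Fintype.card F
  set K := ∏' j : ℕ, (1 - (q : ℝ)⁻¹ ^ (j + 1))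
  have hq : (1 : ℝ) < q := by exact_mod_cast Fintype.one_lt_card
  have hq0 : (0 : ℝ) ≤ (q : ℝ)⁻¹ := by positivity
  have hq1 : (q : ℝ)⁻¹ < 1 := inv_lt_one_of_one_lt₀ hq
  have hsum : Summable fun j : ℕ ↦ (q : ℝ)⁻¹ ^ (j + 1) :=
    (summable_nat_add_iff 1).mpr (summable_geometric_of_lt_one hq0 hq1)
  have hK : 0 < K := tprod_one_sub_pos (fun j ↦ pow_nonneg hq0 _)
    (fun j ↦ pow_lt_one₀ hq0 hq1 (Nat.succ_ne_zero j)) hsum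
  have hGL : (q : ℝ) ^ (r * r) * K ≤ Nat.card (GL (Fin r) F) := by
    rw [Matrix.card_GL_field_eq_pow_mul_prod]
    gcongr
    exact tprod_one_sub_le_prod_range (fun j ↦ pow_nonneg hq0 _)
      (fun j ↦ pow_le_one₀ hq0 hq1.le) hsum r
  have hcount : (Nat.card {M : Matrix m n F // M.rank ≤ r} : ℝ) * Nat.card (GL (Fin r) F) ≤
      (q : ℝ) ^ (Fintype.card m * r + r * Fintype.card n) := by
    exact_mod_cast Matrix.card_rank_le_mul_card_GL_le hrn
  have hexp : (Fintype.card m + Fintype.card n : ℝ) * r - r ^ 2 =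
      ((Fintype.card m * r + r * Fintype.card n : ℕ) : ℝ) - ((r * r : ℕ) : ℝ) := by
    push_cast; ring
  rw [hexp, Real.rpow_sub (by positivity), Real.rpow_natCast, Real.rpow_natCast,
    le_inv_mul_iff₀ hK, le_div_iff₀ (by positivity)]
  calc K * Nat.card {M : Matrix m n F // M.rank ≤ r} * (q : ℝ) ^ (r * r)
      = Nat.card {M : Matrix m n F // M.rank ≤ r} * ((q : ℝ) ^ (r * r) * K) := by ring
    _ ≤ Nat.card {M : Matrix m n F // M.rank ≤ r} * Nat.card (GL (Fin r) F) := by gcongr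
    _ ≤ _ := hcount

open scoped Classical

theorem ball_upper_bound_general (q n m : ℕ) (F : Type) [Field F] [Fintype F]
    (hq : Fintype.card F = q) (hnm : n ≤ m)
    (ρ : ℝ) (hρ : ρ ∈ Set.Ioo (0 : ℝ) 1) (X : Matrix (Fin m) (Fin n) F) :
    (Nat.card {Y : Matrix (Fin m) (Fin n) F // (X - Y).rank ≤ ⌊ρ * n⌋₊} : ℝ) ≤
      (∏' j : ℕ, (1 - ((q : ℝ))⁻¹ ^ (j + 1)))⁻¹ *
        (q : ℝ) ^ (((m : ℝ) * n) * (ρ + ρ * ((n : ℝ) / m) - ρ ^ 2 * ((n : ℝ) / m))) := by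
  subst hq
  obtain ⟨hρ0, hρ1⟩ := hρ
  set r := ⌊ρ * n⌋₊
  have hrn : r ≤ n := Nat.floor_le_of_le (mul_le_of_le_one_left (Nat.cast_nonneg n) hρ1.le)
  have hq1 : (1 : ℝ) ≤ Fintype.card F := by exact_mod_cast Fintype.card_pos
  have hK : 0 ≤ (∏' j : ℕ, (1 - (Fintype.card F : ℝ)⁻¹ ^ (j + 1)))⁻¹ :=
    inv_nonneg.mpr (tprod_nonneg fun j ↦
      sub_nonneg.mpr (pow_le_one₀ (by positivity) (inv_le_one_of_one_le₀ hq1)))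
  calc (Nat.card {Y : Matrix (Fin m) (Fin n) F // (X - Y).rank ≤ r} : ℝ)
      = Nat.card {M : Matrix (Fin m) (Fin n) F // M.rank ≤ r} :=
        congrArg _ (Nat.card_congr (Equiv.subtypeEquiv (Equiv.subLeft X) fun _ ↦ Iff.rfl))
    _ ≤ (∏' j : ℕ, (1 - (Fintype.card F : ℝ)⁻¹ ^ (j + 1)))⁻¹ *
          (Fintype.card F : ℝ) ^ ((m + n : ℝ) * r - r ^ 2) := by
      simpa only [Fintype.card_fin] using
        Matrix.card_rank_le_le_inv_tprod_mul_rpow (F := F) (m := Fin m) (n := Fin n)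
          (by rwa [Fintype.card_fin])
    _ ≤ _ := by
      gcongr
      exact add_mul_floor_sub_sq_le hnm hρ0.le hρ1.le

/-- Upper bound on the size of a rank-metric ball: for `X ∈ F_q^{m×n}` with `n ≤ m`
and `ρ ∈ (0,1)`, `|B_R(X,ρ)| ≤ K_q⁻¹ · q^{mn(ρ + ρb − ρ²b)}` where `b = n/m` and
`K_q = ∏_{j≥1} (1 - q^{-j})`. -/
theorem ball_upper_bound (q n m : ℕ) (F : Type) [Field F] [Fintype F]
    (hq : Fintype.card F = q) (hn : 0 < n) (hnm : n ≤ m)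
    (ρ : ℝ) (hρ : ρ ∈ Set.Ioo (0 : ℝ) 1) (X : Matrix (Fin m) (Fin n) F) :
    (Nat.card {Y : Matrix (Fin m) (Fin n) F // (X - Y).rank ≤ ⌊ρ * n⌋₊} : ℝ) ≤
      (∏' j : ℕ, (1 - ((q : ℝ))⁻¹ ^ (j + 1)))⁻¹ *
        (q : ℝ) ^ (((m : ℝ) * n) * (ρ + ρ * ((n : ℝ) / m) - ρ ^ 2 * ((n : ℝ) / m))) :=
  ball_upper_bound_general q n m F hq hnm ρ hρ X
end

section
/- If C ⊆ F_q^{m×n} is a rank-metric code with minimum rank distance d (i.e., rank(X−Y) ≥ d for all distinct X, Y ∈ C), then log_q |C| ≤ m(n − d + 1). -/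
/-!
Two distinct codewords differ in rank by at least `d`, so they cannot agree on any `n - d + 1`
columns: otherwise their difference would be supported on `d - 1` columns and have rank below `d`.
Hence restricting to a fixed set of `n - d + 1` columns is injective on the code, which bounds
its size by the number `q ^ (m (n - d + 1))` of `m × (n - d + 1)` matrices.
-/

open Finset

namespace Matrix

variable {F m n : Type*} [Field F] [Fintype n] [DecidableEq n]

theorem rank_le_card_of_col_eq_zero (A : Matrix m n F) (s : Finset n)
    (h : ∀ j ∉ s, ∀ i, A i j = 0) : A.rank ≤ #s := by
  set D : Matrix n n F := diagonal fun j => if j ∈ s then 1 else 0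
  have hA : A = A * D := by
    ext i j
    by_cases hj : j ∈ s <;> simp [D, hj, h j]
  calc A.rank ≤ D.rank := hA ▸ rank_mul_le_right _ _
    _ = #s := by classical simp [D, rank_diagonal, Fintype.card_subtype]

theorem rank_sub_le_of_submatrix_eq {X Y : Matrix m n F} {s : Finset n}
    (h : X.submatrix id ((↑) : s → n) = Y.submatrix id (↑)) : (X - Y).rank ≤ #sᶜ := by
  refine rank_le_card_of_col_eq_zero _ _ fun j hj i => ?_
  simpa [sub_eq_zero] using congr_fun₂ h i ⟨j, by simpa using hj⟩

theorem card_le_pow_of_forall_le_rank_sub [Fintype F] [Fintype m] (C : Set (Matrix m n F)) {d : ℕ}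
    (hd : 1 ≤ d) (hdn : d ≤ Fintype.card n)
    (hdist : ∀ X ∈ C, ∀ Y ∈ C, X ≠ Y → d ≤ (X - Y).rank) :
    Nat.card C ≤ Fintype.card F ^ (Fintype.card m * (Fintype.card n - d + 1)) := by
  obtain ⟨s, -, hs⟩ := exists_subset_card_eq (s := (univ : Finset n))
    (n := Fintype.card n - d + 1) (by rw [card_univ]; omega)
  have hinj : Function.Injective fun X : C => X.1.submatrix id ((↑) : s → n) := by
    rintro ⟨X, hX⟩ ⟨Y, hY⟩ hXY
    simp only at hXY
    by_contra hne
    have hrank := rank_sub_le_of_submatrix_eq hXY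
    have hdle := hdist X hX Y hY (fun h => hne (Subtype.ext h))
    rw [card_compl, hs] at hrank
    omega
  calc Nat.card C ≤ Nat.card (m → s → F) := Nat.card_le_card_of_injective _ hinj
    _ = _ := by
        rw [Nat.card_fun, Nat.card_fun, Nat.card_eq_finsetCard, hs, ← pow_mul, mul_comm,
          Nat.card_eq_fintype_card, Nat.card_eq_fintype_card]

end Matrix

theorem Real.logb_natCast_le_of_le_pow {b N k : ℕ} (hb : 1 < b) (h : N ≤ b ^ k) :
    Real.logb b N ≤ k := by
  obtain rfl | hN := N.eq_zero_or_pos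
  · simp
  have hb' : (1 : ℝ) < b := by exact_mod_cast hb
  calc Real.logb b N ≤ Real.logb b ((b : ℝ) ^ k) :=
        Real.logb_le_logb_of_le hb' (by exact_mod_cast hN) (by exact_mod_cast h)
    _ = k := by rw [Real.logb_pow, Real.logb_self_eq_one hb', mul_one]

theorem singleton_bound_general (q m n d : ℕ) (F : Type) [Field F] [Fintype F]
    (hq : Fintype.card F = q) (hd : 1 ≤ d) (hdn : d ≤ n)
    (C : Set (Matrix (Fin m) (Fin n) F))
    (hdist : ∀ X ∈ C, ∀ Y ∈ C, X ≠ Y → d ≤ (X - Y).rank) :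
    Real.logb q (Nat.card C) ≤ (m * (n - d + 1) : ℕ) := by
  have hcard := Matrix.card_le_pow_of_forall_le_rank_sub C hd (by simpa using hdn) hdist
  simp only [Fintype.card_fin, hq] at hcard
  exact Real.logb_natCast_le_of_le_pow (hq ▸ Fintype.one_lt_card) hcard

/-- Singleton bound for rank-metric codes: if `C ⊆ F_q^{m×n}` has minimum rank
distance `d`, then `log_q |C| ≤ m(n − d + 1)`. -/
theorem singleton_bound (q m n d : ℕ) (F : Type) [Field F] [Fintype F]
    (hq : Fintype.card F = q) (hnm : n ≤ m) (hd : 1 ≤ d) (hdn : d ≤ n)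
    (C : Set (Matrix (Fin m) (Fin n) F)) (hC : C.Nonempty)
    (hdist : ∀ X ∈ C, ∀ Y ∈ C, X ≠ Y → d ≤ (X - Y).rank) :
    Real.logb q (Nat.card C) ≤ (m * (n - d + 1) : ℕ) :=
  singleton_bound_general q m n d F hq hd hdn C hdist
end

section
/- Let U and V be independently and uniformly chosen subspaces of F_q^m of dimensions d₁ and d₂ respectively, with d₁ ≥ d₂. Then for any α ∈ (0,1) with αd₂ an integer, the probability that dim(U ∩ V) > αd₂ is at most K_q^{-3} · q^{α(1−α)d₂² − αd₂(m−d₁)}, where K_q = ∏_{j=1}^∞ (1 − q^{-j}). -/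
open scoped Classical

set_option linter.unusedSectionVars false
set_option maxHeartbeats 1000000


private lemma exp_neg_two_mul_le {x : ℝ} (h0 : 0 ≤ x) (h2 : x ≤ 1/2) :
    Real.exp (-(2*x)) ≤ 1 - x := by
  have h := Real.add_one_le_exp (2*x)
  have hmul : Real.exp (-(2*x)) * Real.exp (2*x) = 1 := by
    rw [← Real.exp_add]; simp
  nlinarith [Real.exp_pos (-(2*x)), Real.exp_pos (2*x)]

section K
variable {q : ℕ} (hq : 2 ≤ q)
include hq

private lemma c_pos (j : ℕ) : 0 < ((q:ℝ))⁻¹ ^ (j+1) := by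
  have : (0:ℝ) < q := by exact_mod_cast Nat.lt_of_lt_of_le Nat.zero_lt_two hq
  positivity

private lemma c_le_half (j : ℕ) : ((q:ℝ))⁻¹ ^ (j+1) ≤ 1/2 := by
  have hq2 : (2:ℝ) ≤ q := by exact_mod_cast hq
  have h1 : ((q:ℝ))⁻¹ ≤ 1/2 := by
    rw [inv_le_comm₀ (by linarith) (by norm_num)]
    linarith
  calc ((q:ℝ))⁻¹ ^ (j+1) ≤ ((q:ℝ))⁻¹ := by
        apply pow_le_of_le_one (by positivity) (by
          rw [inv_le_one_iff₀]; right; linarith) (Nat.succ_ne_zero j)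
    _ ≤ 1/2 := h1

private lemma c_summable : Summable (fun j : ℕ => ((q:ℝ))⁻¹ ^ (j+1)) := by
  have hq2 : (2:ℝ) ≤ q := by exact_mod_cast hq
  have h0 : (0:ℝ) ≤ ((q:ℝ))⁻¹ := by positivity
  have h1 : ((q:ℝ))⁻¹ < 1 := by
    rw [inv_lt_one_iff₀]; right; linarith
  simpa [pow_succ] using (summable_geometric_of_lt_one h0 h1).mul_right ((q:ℝ))⁻¹

private lemma K_multipliable : Multipliable (fun j : ℕ => 1 - ((q:ℝ))⁻¹ ^ (j+1)) := by
  have hpos : ∀ j : ℕ, (0:ℝ) < 1 - ((q:ℝ))⁻¹ ^ (j+1) := fun j => by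
    have := c_le_half hq j; linarith
  have hlog : Summable fun j : ℕ => Real.log (1 - ((q:ℝ))⁻¹ ^ (j+1)) := by
    have H : Summable fun j : ℕ => -Real.log (1 - ((q:ℝ))⁻¹ ^ (j+1)) := by
      apply Summable.of_nonneg_of_le
        (fun j => by
          have h1 := hpos j
          have h2 := c_pos hq j
          have h := Real.log_nonpos (le_of_lt (hpos j)) (by linarith)
          linarith)
        (fun j => ?_) ((c_summable hq).mul_left 2)
      have hle : -(2 * ((q:ℝ))⁻¹ ^ (j+1)) ≤ Real.log (1 - ((q:ℝ))⁻¹ ^ (j+1)) := by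
        rw [Real.le_log_iff_exp_le (hpos j)]
        simpa [mul_comm] using exp_neg_two_mul_le (c_pos hq j).le (c_le_half hq j)
      linarith
    simpa using H.neg
  exact Real.multipliable_of_summable_log hpos hlog

private lemma K_le_prod (k : ℕ) :
    (∏' j : ℕ, (1 - ((q:ℝ))⁻¹ ^ (j+1))) ≤ ∏ j ∈ Finset.range k, (1 - ((q:ℝ))⁻¹ ^ (j+1)) := by
  have hpos : ∀ j : ℕ, (0:ℝ) ≤ 1 - ((q:ℝ))⁻¹ ^ (j+1) := fun j => by
    have := c_le_half hq j; linarith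
  have hle1 : ∀ j : ℕ, (1 - ((q:ℝ))⁻¹ ^ (j+1)) ≤ 1 := fun j => by
    have := c_pos hq j; linarith
  apply le_of_tendsto (K_multipliable hq).hasProd
  filter_upwards [Filter.eventually_ge_atTop (Finset.range k)] with s hs
  rw [← Finset.prod_sdiff hs]
  exact mul_le_of_le_one_left (Finset.prod_nonneg fun j _ => hpos j)
    (Finset.prod_le_one (fun j _ => hpos j) (fun j _ => hle1 j))

private lemma K_pos : 0 < ∏' j : ℕ, (1 - ((q:ℝ))⁻¹ ^ (j+1)) := by
  refine lt_of_lt_of_le (Real.exp_pos (-(2 * ∑' j : ℕ, ((q:ℝ))⁻¹ ^ (j+1)))) ?_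
  apply ge_of_tendsto (K_multipliable hq).hasProd
  filter_upwards with s
  calc Real.exp (-(2 * ∑' j : ℕ, ((q:ℝ))⁻¹ ^ (j+1)))
      ≤ Real.exp (∑ j ∈ s, -(2 * ((q:ℝ))⁻¹ ^ (j+1))) := by
        apply Real.exp_le_exp.2
        have h := Summable.sum_le_tsum s (fun i _ => (c_pos hq i).le) (c_summable hq)
        have : ∑ j ∈ s, -(2 * ((q:ℝ))⁻¹ ^ (j+1)) = -(2 * ∑ j ∈ s, ((q:ℝ))⁻¹ ^ (j+1)) := by
          simp [Finset.mul_sum]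
        rw [this]; linarith
    _ = ∏ j ∈ s, Real.exp (-(2 * ((q:ℝ))⁻¹ ^ (j+1))) := Real.exp_sum s _
    _ ≤ ∏ j ∈ s, (1 - ((q:ℝ))⁻¹ ^ (j+1)) :=
        Finset.prod_le_prod (fun j _ => (Real.exp_pos _).le)
          (fun j _ => exp_neg_two_mul_le (c_pos hq j).le (c_le_half hq j))

private lemma K_le_one : (∏' j : ℕ, (1 - ((q:ℝ))⁻¹ ^ (j+1))) ≤ 1 := by
  simpa using K_le_prod hq 0

end K

section Grass
variable {F : Type} [Field F] [Fintype F]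

private lemma span_eq_of_li {V : Type} [AddCommGroup V] [Module F V] [Finite V]
    {k : ℕ} (W : Submodule F V) (hW : Module.finrank F W = k) (s : Fin k → ↥W)
    (hs : LinearIndependent F fun i => ((s i : V))) :
    Submodule.span F (Set.range fun i => ((s i : V))) = W := by
  apply Submodule.eq_of_le_of_finrank_le
  · rw [Submodule.span_le]
    rintro _ ⟨i, rfl⟩
    exact (s i).2
  · rw [hW, finrank_span_eq_card hs, Fintype.card_fin]

private lemma grass_count (V : Type) [AddCommGroup V] [Module F V] [Finite V]
    {k : ℕ} (hk : k ≤ Module.finrank F V) :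
    Nat.card {W : Submodule F V // Module.finrank F W = k} *
      ∏ i : Fin k, (Fintype.card F ^ k - Fintype.card F ^ (i:ℕ)) =
      ∏ i : Fin k, (Fintype.card F ^ Module.finrank F V - Fintype.card F ^ (i:ℕ)) := by
  classical
  set Gr := {W : Submodule F V // Module.finrank F W = k} with hGr
  let fib : Gr → Type := fun W => {s : Fin k → ↥W.1 // LinearIndependent F s}
  let g : (Σ W : Gr, fib W) → {s : Fin k → V // LinearIndependent F s} := fun x =>
    ⟨fun i => ((x.2.1 i : V)), by
      have h := x.2.2.map' x.1.1.subtype (Submodule.ker_subtype _)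
      simpa [Function.comp_def] using h⟩
  have hbij : Function.Bijective g := by
    constructor
    · rintro ⟨⟨W, hW⟩, ⟨s, hs⟩⟩ ⟨⟨W', hW'⟩, ⟨s', hs'⟩⟩ h
      simp only [g, Subtype.mk.injEq] at h
      replace h := congrArg Subtype.val h
      dsimp only at h
      have hsc : LinearIndependent F fun i => ((s i : V)) := by
        have := hs.map' W.subtype (Submodule.ker_subtype _)
        simpa [Function.comp_def] using this
      have hsc' : LinearIndependent F fun i => ((s' i : V)) := by
        have := hs'.map' W'.subtype (Submodule.ker_subtype _)
        simpa [Function.comp_def] using this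
      have hWW : W = W' := by
        rw [← span_eq_of_li W hW s hsc, ← span_eq_of_li W' hW' s' hsc', h]
      subst hWW
      have hss : s = s' := by
        funext i
        exact Subtype.ext (congrFun h i)
      subst hss
      rfl
    · rintro ⟨s, hs⟩
      refine ⟨⟨⟨Submodule.span F (Set.range s), ?_⟩,
        ⟨fun i => ⟨s i, Submodule.subset_span (Set.mem_range_self i)⟩, ?_⟩⟩, ?_⟩
      · rw [finrank_span_eq_card hs, Fintype.card_fin]
      · exact LinearIndependent.of_comp (Submodule.span F (Set.range s)).subtype
          (by simpa [Function.comp_def] using hs)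
      · exact Subtype.ext rfl
  haveI : Fintype Gr := Fintype.ofFinite _
  haveI : ∀ W : Gr, Fintype (fib W) := fun W => Fintype.ofFinite _
  have fiber_card : ∀ W : Gr, Nat.card (fib W) =
      ∏ i : Fin k, (Fintype.card F ^ k - Fintype.card F ^ (i:ℕ)) := by
    intro W
    have h := card_linearIndependent (K := F) (V := ↥W.1) (k := k) (by rw [W.2])
    rw [W.2] at h
    exact h
  calc Nat.card Gr * ∏ i : Fin k, (Fintype.card F ^ k - Fintype.card F ^ (i:ℕ))
      = ∑ W : Gr, Nat.card (fib W) := by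
        rw [Finset.sum_congr rfl (fun W _ => fiber_card W), Finset.sum_const,
          Finset.card_univ, smul_eq_mul, Nat.card_eq_fintype_card]
    _ = Nat.card (Σ W : Gr, fib W) := by
        rw [Nat.card_eq_fintype_card, Fintype.card_sigma]
        exact (Finset.sum_congr rfl (fun W _ => by rw [Nat.card_eq_fintype_card])).symm
    _ = Nat.card {s : Fin k → V // LinearIndependent F s} :=
        Nat.card_congr (Equiv.ofBijective g hbij)
    _ = ∏ i : Fin k, (Fintype.card F ^ Module.finrank F V - Fintype.card F ^ (i:ℕ)) :=
        card_linearIndependent hk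

end Grass

section Quot
variable {F : Type} [Field F] [Fintype F]

private lemma finrank_map_mkQ {V : Type} [AddCommGroup V] [Module F V] [Finite V]
    {W U : Submodule F V} (hWU : W ≤ U) :
    Module.finrank F (U.map W.mkQ) + Module.finrank F W = Module.finrank F U := by
  have h := LinearMap.finrank_range_add_finrank_ker (W.mkQ.comp U.subtype)
  rw [LinearMap.range_comp, Submodule.range_subtype, LinearMap.ker_comp,
    Submodule.ker_mkQ] at h
  rwa [(Submodule.comapSubtypeEquivOfLe hWU).finrank_eq] at h

private lemma card_above {V : Type} [AddCommGroup V] [Module F V] [Finite V]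
    (W : Submodule F V) (d : ℕ) (hWd : Module.finrank F W ≤ d) :
    Nat.card {U : Submodule F V // Module.finrank F U = d ∧ W ≤ U} =
      Nat.card {U' : Submodule F (V ⧸ W) //
        Module.finrank F U' = d - Module.finrank F W} := by
  haveI : Finite (V ⧸ W) := Finite.of_surjective _ (Submodule.mkQ_surjective W)
  apply Nat.card_congr
  refine ⟨fun U => ⟨U.1.map W.mkQ, ?_⟩, fun U' => ⟨U'.1.comap W.mkQ, ?_, ?_⟩, ?_, ?_⟩
  · have h := finrank_map_mkQ U.2.2
    have h2 := U.2.1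
    omega
  · have hle : W ≤ U'.1.comap W.mkQ := by
      intro x hx
      have hx0 : W.mkQ x = 0 := (Submodule.Quotient.mk_eq_zero W).2 hx
      simp [Submodule.mem_comap, hx0]
    have h := finrank_map_mkQ hle
    have hmc : (U'.1.comap W.mkQ).map W.mkQ = U'.1 :=
      Submodule.map_comap_eq_self (by rw [Submodule.range_mkQ]; exact le_top)
    rw [hmc] at h
    have h2 := U'.2
    omega
  · intro x hx
    have hx0 : W.mkQ x = 0 := (Submodule.Quotient.mk_eq_zero W).2 hx
    simp [Submodule.mem_comap, hx0]
  · intro U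
    apply Subtype.ext
    show (U.1.map W.mkQ).comap W.mkQ = U.1
    rw [Submodule.comap_map_eq, Submodule.ker_mkQ]
    exact sup_eq_left.2 U.2.2
  · intro U'
    apply Subtype.ext
    exact Submodule.map_comap_eq_self (by rw [Submodule.range_mkQ]; exact le_top)

end Quot


section RealBounds
variable {F : Type} [Field F] [Fintype F]

private lemma hq2 : 2 ≤ Fintype.card F := Fintype.one_lt_card

private lemma Qpos : (0:ℝ) < (Fintype.card F : ℝ) := by
  have := hq2 (F := F); positivity

private lemma Qge1 : (1:ℝ) ≤ (Fintype.card F : ℝ) := by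
  have : (2:ℝ) ≤ (Fintype.card F : ℝ) := by exact_mod_cast hq2 (F := F)
  linarith

private lemma cast_prod_pow (n k : ℕ) (hk : k ≤ n) :
    ((∏ i : Fin k, (Fintype.card F ^ n - Fintype.card F ^ (i:ℕ)) : ℕ) : ℝ) =
      ∏ i : Fin k, ((Fintype.card F:ℝ) ^ n - (Fintype.card F:ℝ) ^ (i:ℕ)) := by
  rw [Nat.cast_prod]
  refine Finset.prod_congr rfl fun i _ => ?_
  have hle : Fintype.card F ^ (i:ℕ) ≤ Fintype.card F ^ n :=
    Nat.pow_le_pow_right Fintype.card_pos (le_trans (le_of_lt i.2) hk)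
  rw [Nat.cast_sub hle, Nat.cast_pow, Nat.cast_pow]

private lemma bk_eq (k : ℕ) :
    (∏ i : Fin k, ((Fintype.card F:ℝ) ^ k - (Fintype.card F:ℝ) ^ (i:ℕ))) =
      (Fintype.card F:ℝ) ^ (k*k) *
        ∏ j ∈ Finset.range k, (1 - ((Fintype.card F:ℝ))⁻¹ ^ (j+1)) := by
  set Q := (Fintype.card F : ℝ) with hQdef
  have hQ : (0:ℝ) < Q := Qpos
  have step : ∀ i : Fin k, Q ^ k - Q ^ (i:ℕ) = Q ^ k * (1 - Q⁻¹ ^ (k - (i:ℕ))) := by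
    intro i
    have hne : Q ^ (k - (i:ℕ)) ≠ 0 := by positivity
    have key : Q ^ k * (Q ^ (k - (i:ℕ)))⁻¹ = Q ^ (i:ℕ) := by
      rw [show Q ^ k = Q ^ (i:ℕ) * Q ^ (k - (i:ℕ)) from by
        rw [← pow_add]; congr 1; omega]
      rw [mul_assoc, mul_inv_cancel₀ hne, mul_one]
    rw [mul_sub, mul_one, inv_pow, key]
  rw [Finset.prod_congr rfl (fun i _ => step i), Finset.prod_mul_distrib,
    Finset.prod_const, Finset.card_univ, Fintype.card_fin, ← pow_mul]
  congr 1
  rw [Fin.prod_univ_eq_prod_range (fun i => 1 - Q⁻¹ ^ (k - i)) k,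
    ← Finset.prod_range_reflect]
  refine Finset.prod_congr rfl fun j hj => ?_
  rw [Finset.mem_range] at hj
  congr 2
  omega

private lemma grass_lower (V : Type) [AddCommGroup V] [Module F V] [Finite V]
    {k : ℕ} (hk : k ≤ Module.finrank F V) :
    (Fintype.card F:ℝ) ^ (k * (Module.finrank F V - k)) ≤
      (Nat.card {W : Submodule F V // Module.finrank F W = k} : ℝ) := by
  set Q := (Fintype.card F : ℝ) with hQdef
  set n := Module.finrank F V with hn
  have hQ : (0:ℝ) < Q := Qpos
  have hQ1 : (1:ℝ) ≤ Q := Qge1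
  have hcount : (Nat.card {W : Submodule F V // Module.finrank F W = k} : ℝ) *
      ∏ i : Fin k, (Q ^ k - Q ^ (i:ℕ)) = ∏ i : Fin k, (Q ^ n - Q ^ (i:ℕ)) := by
    have := grass_count V hk
    have hc := congrArg (fun x : ℕ => (x : ℝ)) this
    simpa [Nat.cast_mul, cast_prod_pow k k le_rfl, cast_prod_pow (Module.finrank F V) k hk] using hc
  have hBk : (0:ℝ) < ∏ i : Fin k, (Q ^ k - Q ^ (i:ℕ)) := by
    apply Finset.prod_pos
    intro i _
    have : Q ^ (i:ℕ) < Q ^ k := by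
      apply pow_lt_pow_right₀ _ i.2
      have h2 : (2:ℝ) ≤ (Fintype.card F:ℝ) := by exact_mod_cast hq2 (F := F)
      rw [hQdef]; linarith
    linarith
  have hBn : Q ^ (k * (n - k)) * ∏ i : Fin k, (Q ^ k - Q ^ (i:ℕ)) ≤
      ∏ i : Fin k, (Q ^ n - Q ^ (i:ℕ)) := by
    have : Q ^ (k * (n - k)) * ∏ i : Fin k, (Q ^ k - Q ^ (i:ℕ)) =
        ∏ i : Fin k, (Q ^ (n - k) * (Q ^ k - Q ^ (i:ℕ))) := by
      rw [Finset.prod_mul_distrib, Finset.prod_const, Finset.card_univ,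
        Fintype.card_fin, ← pow_mul, Nat.mul_comm k (n-k)]
    rw [this]
    apply Finset.prod_le_prod
    · intro i _
      have : Q ^ (i:ℕ) ≤ Q ^ k := pow_le_pow_right₀ hQ1 (le_of_lt i.2)
      have h2 : (0:ℝ) ≤ Q ^ (n-k) := by positivity
      nlinarith
    · intro i _
      have heq : Q ^ (n - k) * (Q ^ k - Q ^ (i:ℕ)) = Q ^ n - Q ^ (n - k + (i:ℕ)) := by
        rw [mul_sub, ← pow_add, ← pow_add]
        congr 2
        omega
      rw [heq]
      have : Q ^ (i:ℕ) ≤ Q ^ (n - k + (i:ℕ)) := pow_le_pow_right₀ hQ1 (by omega)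
      linarith
  refine (mul_le_mul_iff_of_pos_right hBk).1 ?_
  rw [hcount]
  exact hBn

private lemma grass_upper (V : Type) [AddCommGroup V] [Module F V] [Finite V]
    {k : ℕ} (hk : k ≤ Module.finrank F V) :
    (Nat.card {W : Submodule F V // Module.finrank F W = k} : ℝ) ≤
      (∏' j : ℕ, (1 - ((Fintype.card F:ℝ))⁻¹ ^ (j+1)))⁻¹ *
        (Fintype.card F:ℝ) ^ (k * (Module.finrank F V - k)) := by
  set Q := (Fintype.card F : ℝ) with hQdef
  set n := Module.finrank F V with hn
  set K := ∏' j : ℕ, (1 - (Q⁻¹ : ℝ) ^ (j+1)) with hKdef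
  have hQ : (0:ℝ) < Q := Qpos
  have hQ1 : (1:ℝ) ≤ Q := Qge1
  have hKpos : (0:ℝ) < K := K_pos (hq2 (F := F))
  have hcount : (Nat.card {W : Submodule F V // Module.finrank F W = k} : ℝ) *
      ∏ i : Fin k, (Q ^ k - Q ^ (i:ℕ)) = ∏ i : Fin k, (Q ^ n - Q ^ (i:ℕ)) := by
    have := grass_count V hk
    have hc := congrArg (fun x : ℕ => (x : ℝ)) this
    simpa [Nat.cast_mul, cast_prod_pow k k le_rfl, cast_prod_pow (Module.finrank F V) k hk] using hc
  have hBk : K * Q ^ (k*k) ≤ ∏ i : Fin k, (Q ^ k - Q ^ (i:ℕ)) := by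
    rw [bk_eq k]
    rw [mul_comm]
    apply mul_le_mul_of_nonneg_left (K_le_prod (hq2 (F := F)) k) (by positivity)
  have hBn : (∏ i : Fin k, (Q ^ n - Q ^ (i:ℕ))) ≤ Q ^ (k * (n-k)) * Q ^ (k*k) := by
    rw [← pow_add]
    have hsum : k * (n-k) + k*k = n * k := by
      rw [← Nat.mul_add, Nat.sub_add_cancel hk, Nat.mul_comm]
    rw [hsum]
    calc (∏ i : Fin k, (Q ^ n - Q ^ (i:ℕ))) ≤ ∏ _i : Fin k, Q ^ n := by
          apply Finset.prod_le_prod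
          · intro i _
            have : Q ^ (i:ℕ) ≤ Q ^ n := pow_le_pow_right₀ hQ1 (le_trans (le_of_lt i.2) hk)
            linarith
          · intro i _
            have : (0:ℝ) < Q ^ (i:ℕ) := by positivity
            linarith
      _ = Q ^ (n * k) := by
          rw [Finset.prod_const, Finset.card_univ, Fintype.card_fin, ← pow_mul]
  set N := (Nat.card {W : Submodule F V // Module.finrank F W = k} : ℝ) with hN
  have hN0 : (0:ℝ) ≤ N := by positivity
  have chain : N * (K * Q ^ (k*k)) ≤ Q ^ (k * (n-k)) * Q ^ (k*k) :=
    le_trans (mul_le_mul_of_nonneg_left hBk hN0) (le_trans (le_of_eq hcount) hBn)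
  have hQkk : (0:ℝ) < Q ^ (k*k) := by positivity
  have : N * K ≤ Q ^ (k * (n-k)) := by
    have := (mul_le_mul_iff_of_pos_right hQkk).1 (by linarith [chain] : N * K * Q ^ (k*k) ≤ Q ^ (k * (n-k)) * Q ^ (k*k))
    exact this
  rw [inv_mul_eq_div, le_div_iff₀ hKpos]
  exact this

end RealBounds

/-- If `U` and `V` are independent uniformly random subspaces of `F_q^m` of dimensions
`d₁ ≥ d₂`, then for `α ∈ (0,1)` with `αd₂` an integer, the probability that
`dim(U ∩ V) > αd₂` is at most `K_q⁻³ · q^{α(1−α)d₂² − αd₂(m−d₁)}`. Stated by counting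
pairs of subspaces. -/

theorem subspace_intersection_bound (q m d₁ d₂ : ℕ) (F : Type) [Field F] [Fintype F]
    (hq : Fintype.card F = q) (hd : d₂ ≤ d₁) (hd₁ : d₁ ≤ m)
    (α : ℝ) (hα : α ∈ Set.Ioo (0 : ℝ) 1) (a : ℕ) (ha : (a : ℝ) = α * d₂) :
    (Nat.card {p : {U : Submodule F (Fin m → F) // Module.finrank F U = d₁} ×
        {V : Submodule F (Fin m → F) // Module.finrank F V = d₂} //
        α * d₂ < (Module.finrank F ↥(p.1.1 ⊓ p.2.1) : ℝ)} : ℝ) ≤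
      ((∏' j : ℕ, (1 - ((q : ℝ))⁻¹ ^ (j + 1)))⁻¹) ^ 3 *
        (q : ℝ) ^ (α * (1 - α) * (d₂ : ℝ) ^ 2 - α * d₂ * ((m : ℝ) - d₁)) *
        (Nat.card {U : Submodule F (Fin m → F) // Module.finrank F U = d₁} : ℝ) *
        (Nat.card {V : Submodule F (Fin m → F) // Module.finrank F V = d₂} : ℝ) := by
  subst hq
  obtain ⟨hα0, hα1⟩ := hα
  have hq2 : 2 ≤ Fintype.card F := Fintype.one_lt_card
  have hQ2 : (2:ℝ) ≤ (Fintype.card F : ℝ) := by exact_mod_cast hq2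
  have hQ0 : (0:ℝ) < (Fintype.card F : ℝ) := by linarith
  have hQ1 : (1:ℝ) ≤ (Fintype.card F : ℝ) := by linarith
  have hQne : (Fintype.card F : ℝ) ≠ 0 := ne_of_gt hQ0
  set Q : ℝ := (Fintype.card F : ℝ) with hQdef
  set K : ℝ := ∏' j : ℕ, (1 - Q⁻¹ ^ (j + 1)) with hKdef
  have hKpos : 0 < K := K_pos hq2
  have hKle1 : K ≤ 1 := K_le_one hq2
  have hKinv1 : 1 ≤ K⁻¹ := by
    rw [le_inv_comm₀ one_pos hKpos]; simpa using hKle1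
  have hfr : Module.finrank F (Fin m → F) = m := by
    simp [Module.finrank_fintype_fun_eq_card]
  have hd₂ : d₂ ≤ m := le_trans hd hd₁
  -- dimension of intersection is between 0 and d₂; and `a < dim` means `a + 1 ≤ dim`
  set PU := {U : Submodule F (Fin m → F) // Module.finrank F U = d₁} with hPU
  set PV := {V : Submodule F (Fin m → F) // Module.finrank F V = d₂} with hPV
  set Bad := {p : PU × PV // α * d₂ < (Module.finrank F ↥(p.1.1 ⊓ p.2.1) : ℝ)} with hBad
  have hN1 : Q ^ (d₁ * (m - d₁)) ≤ (Nat.card PU : ℝ) := by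
    have h := grass_lower (F := F) (Fin m → F) (k := d₁) (by rw [hfr]; exact hd₁)
    rwa [hfr] at h
  have hN2 : Q ^ (d₂ * (m - d₂)) ≤ (Nat.card PV : ℝ) := by
    have h := grass_lower (F := F) (Fin m → F) (k := d₂) (by rw [hfr]; exact hd₂)
    rwa [hfr] at h
  have hN10 : (0:ℝ) ≤ (Nat.card PU : ℝ) := Nat.cast_nonneg _
  have hN20 : (0:ℝ) ≤ (Nat.card PV : ℝ) := Nat.cast_nonneg _
  -- the real exponent is the integer `fa`
  set fa : ℤ := (a:ℤ) * ((d₁:ℤ) + (d₂:ℤ)) - (a:ℤ) * (a:ℤ) - (a:ℤ) * (m:ℤ) with hfa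
  have hrpow : Q ^ (α * (1 - α) * (d₂ : ℝ) ^ 2 - α * d₂ * ((m : ℝ) - d₁)) = Q ^ fa := by
    rw [show (α * (1 - α) * (d₂ : ℝ) ^ 2 - α * d₂ * ((m : ℝ) - d₁)) = ((fa : ℤ) : ℝ) from by
      rw [hfa]; push_cast
      linear_combination (α * (d₂:ℝ) + (a:ℝ) + (m:ℝ) - (d₁:ℝ) - (d₂:ℝ)) * ha]
    exact Real.rpow_intCast Q fa
  rw [hrpow]
  -- main case split
  by_cases hcase : a = 0 ∨ (a:ℤ) + (m:ℤ) ≤ (d₁:ℤ) + (d₂:ℤ)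
  · -- trivial case : coefficient is ≥ 1
    have hfa0 : 0 ≤ fa := by
      have hrw : fa = (a:ℤ) * ((d₁:ℤ) + (d₂:ℤ) - (a:ℤ) - (m:ℤ)) := by rw [hfa]; ring
      rcases hcase with h0 | hge
      · subst h0; simp [hrw]
      · rw [hrw]
        have haZ : (0:ℤ) ≤ (a:ℤ) := Int.natCast_nonneg a
        have : (0:ℤ) ≤ (d₁:ℤ) + (d₂:ℤ) - (a:ℤ) - (m:ℤ) := by omega
        exact mul_nonneg haZ this
    have hone : (1:ℝ) ≤ K⁻¹ ^ 3 * Q ^ fa := by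
      have h1 : (1:ℝ) ≤ K⁻¹ ^ 3 := one_le_pow₀ hKinv1
      have h2 : (1:ℝ) ≤ Q ^ fa := one_le_zpow₀ hQ1 hfa0
      nlinarith
    have hcard : (Nat.card Bad : ℝ) ≤ (Nat.card PU : ℝ) * (Nat.card PV : ℝ) := by
      have h : Nat.card Bad ≤ Nat.card (PU × PV) :=
        Nat.card_le_card_of_injective (fun p => p.1) (fun p p' h => Subtype.ext h)
      rw [Nat.card_prod] at h
      exact_mod_cast h
    calc (Nat.card Bad : ℝ) ≤ (Nat.card PU : ℝ) * (Nat.card PV : ℝ) := hcard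
      _ = 1 * ((Nat.card PU : ℝ) * (Nat.card PV : ℝ)) := by ring
      _ ≤ (K⁻¹ ^ 3 * Q ^ fa) * ((Nat.card PU : ℝ) * (Nat.card PV : ℝ)) :=
          mul_le_mul_of_nonneg_right hone (by positivity)
      _ = K⁻¹ ^ 3 * Q ^ fa * (Nat.card PU : ℝ) * (Nat.card PV : ℝ) := by ring
  · -- main case
    push_neg at hcase
    obtain ⟨ha0, hlt⟩ := hcase
    have ha1 : 1 ≤ a := Nat.one_le_iff_ne_zero.2 ha0
    set S : ℕ → Type := fun k => {p : PU × PV // Module.finrank F ↥(p.1.1 ⊓ p.2.1) = k} with hS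
    -- Step 1 : stratification
    have hstrat : Nat.card Bad ≤ ∑ k ∈ Finset.Icc (a+1) d₂, Nat.card (S k) := by
      have hmem : ∀ p : Bad, Module.finrank F ↥(p.1.1.1 ⊓ p.1.2.1) ∈ Finset.Icc (a+1) d₂ := by
        intro p
        rw [Finset.mem_Icc]
        constructor
        · have hlt : (a:ℝ) < (Module.finrank F ↥(p.1.1.1 ⊓ p.1.2.1) : ℝ) := by
            rw [ha]; exact p.2
          have : a < Module.finrank F ↥(p.1.1.1 ⊓ p.1.2.1) := by exact_mod_cast hlt
          omega
        · have hle : Module.finrank F ↥(p.1.1.1 ⊓ p.1.2.1) ≤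
              Module.finrank F ↥(p.1.2.1 : Submodule F (Fin m → F)) :=
            Submodule.finrank_mono inf_le_right
          rw [p.1.2.2] at hle
          exact hle
      let Φ : Bad → Σ k : ↥(Finset.Icc (a+1) d₂), S k.1 :=
        fun p => ⟨⟨_, hmem p⟩, ⟨p.1, rfl⟩⟩
      have hΦ : Function.Injective Φ := by
        intro p p' h
        have h2 := congrArg (fun x : Σ k : ↥(Finset.Icc (a+1) d₂), S k.1 => x.2.1) h
        exact Subtype.ext h2
      haveI : ∀ k : ↥(Finset.Icc (a+1) d₂), Fintype (S k.1) := fun k => Fintype.ofFinite _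
      have h1 : Nat.card Bad ≤ Nat.card (Σ k : ↥(Finset.Icc (a+1) d₂), S k.1) :=
        Nat.card_le_card_of_injective Φ hΦ
      have h2 : Nat.card (Σ k : ↥(Finset.Icc (a+1) d₂), S k.1) =
          ∑ k ∈ Finset.Icc (a+1) d₂, Nat.card (S k) := by
        rw [Nat.card_eq_fintype_card, Fintype.card_sigma,
          ← Finset.sum_coe_sort (Finset.Icc (a+1) d₂) (fun k => Nat.card (S k))]
        exact Finset.sum_congr rfl (fun k _ => (Nat.card_eq_fintype_card (α := S k.1)).symm)
      exact h1.trans (le_of_eq h2)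
    -- Step 2 : per-stratum bound
    have hksum : ∀ k ∈ Finset.Icc (a+1) d₂, (Nat.card (S k) : ℝ) ≤
        K⁻¹ ^ 3 * Q ^ (k*(m-k) + (d₁-k)*(m-d₁) + (d₂-k)*(m-d₂)) := by
      intro k hk
      rw [Finset.mem_Icc] at hk
      obtain ⟨hka, hkd₂⟩ := hk
      have hkd₁ : k ≤ d₁ := le_trans hkd₂ hd
      have hkm : k ≤ m := le_trans hkd₁ hd₁
      set Gr := {W : Submodule F (Fin m → F) // Module.finrank F W = k} with hGrdef
      let AU : Gr → Type := fun W =>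
        {U : Submodule F (Fin m → F) // Module.finrank F U = d₁ ∧ W.1 ≤ U}
      let AV : Gr → Type := fun W =>
        {U : Submodule F (Fin m → F) // Module.finrank F U = d₂ ∧ W.1 ≤ U}
      let Ψ : S k → Σ W : Gr, AU W × AV W := fun p =>
        ⟨⟨p.1.1.1 ⊓ p.1.2.1, p.2⟩,
         (⟨p.1.1.1, p.1.1.2, inf_le_left⟩, ⟨p.1.2.1, p.1.2.2, inf_le_right⟩)⟩
      have hΨ : Function.Injective Ψ := by
        intro p p' h
        have h1 := congrArg (fun x : Σ W : Gr, AU W × AV W => x.2.1.1) h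
        have h2 := congrArg (fun x : Σ W : Gr, AU W × AV W => x.2.2.1) h
        exact Subtype.ext (Prod.ext (Subtype.ext h1) (Subtype.ext h2))
      haveI : Fintype Gr := Fintype.ofFinite _
      haveI : ∀ W : Gr, Fintype (AU W × AV W) := fun W => Fintype.ofFinite _
      have hcard1 : Nat.card (S k) ≤ ∑ W : Gr, Nat.card (AU W) * Nat.card (AV W) := by
        have h := Nat.card_le_card_of_injective Ψ hΨ
        have h2 : Nat.card (Σ W : Gr, AU W × AV W) =
            ∑ W : Gr, Nat.card (AU W) * Nat.card (AV W) := by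
          rw [Nat.card_eq_fintype_card, Fintype.card_sigma]
          refine Finset.sum_congr rfl fun W _ => ?_
          rw [← Nat.card_eq_fintype_card, Nat.card_prod]
        exact h.trans (le_of_eq h2)
      have hquot : ∀ W : Gr, Module.finrank F ((Fin m → F) ⧸ W.1) = m - k := by
        intro W
        have h := Submodule.finrank_quotient_add_finrank W.1
        rw [hfr, W.2] at h
        omega
      haveI : ∀ W : Gr, Finite ((Fin m → F) ⧸ W.1) := fun W =>
        Finite.of_surjective _ (Submodule.mkQ_surjective W.1)
      have hAU : ∀ W : Gr, (Nat.card (AU W) : ℝ) ≤ K⁻¹ * Q ^ ((d₁-k)*(m-d₁)) := by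
        intro W
        have hWd : Module.finrank F W.1 ≤ d₁ := by rw [W.2]; exact hkd₁
        have hc := card_above (F := F) W.1 d₁ hWd
        rw [W.2] at hc
        have hup := grass_upper (F := F) ((Fin m → F) ⧸ W.1) (k := d₁ - k)
          (by rw [hquot W]; omega)
        rw [hquot W, ← hQdef, ← hKdef] at hup
        have hexp : (d₁ - k) * ((m - k) - (d₁ - k)) = (d₁-k)*(m-d₁) := by
          congr 1; omega
        rw [hexp] at hup
        calc (Nat.card (AU W) : ℝ) = _ := by rw [hc]
          _ ≤ K⁻¹ * Q ^ ((d₁-k)*(m-d₁)) := hup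
      have hAV : ∀ W : Gr, (Nat.card (AV W) : ℝ) ≤ K⁻¹ * Q ^ ((d₂-k)*(m-d₂)) := by
        intro W
        have hWd : Module.finrank F W.1 ≤ d₂ := by rw [W.2]; exact hkd₂
        have hc := card_above (F := F) W.1 d₂ hWd
        rw [W.2] at hc
        have hup := grass_upper (F := F) ((Fin m → F) ⧸ W.1) (k := d₂ - k)
          (by rw [hquot W]; omega)
        rw [hquot W, ← hQdef, ← hKdef] at hup
        have hexp : (d₂ - k) * ((m - k) - (d₂ - k)) = (d₂-k)*(m-d₂) := by
          congr 1; omega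
        rw [hexp] at hup
        calc (Nat.card (AV W) : ℝ) = _ := by rw [hc]
          _ ≤ K⁻¹ * Q ^ ((d₂-k)*(m-d₂)) := hup
      have hGr_up : (Nat.card Gr : ℝ) ≤ K⁻¹ * Q ^ (k*(m-k)) := by
        have hup := grass_upper (F := F) (Fin m → F) (k := k) (by rw [hfr]; exact hkm)
        rw [hfr, ← hQdef, ← hKdef] at hup
        exact hup
      have hKinv0 : (0:ℝ) ≤ K⁻¹ := by positivity
      calc (Nat.card (S k) : ℝ)
          ≤ ∑ W : Gr, (Nat.card (AU W) : ℝ) * (Nat.card (AV W) : ℝ) := by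
            exact_mod_cast hcard1
        _ ≤ ∑ _W : Gr, (K⁻¹ * Q ^ ((d₁-k)*(m-d₁))) * (K⁻¹ * Q ^ ((d₂-k)*(m-d₂))) :=
            Finset.sum_le_sum fun W _ =>
              mul_le_mul (hAU W) (hAV W) (Nat.cast_nonneg _) (by positivity)
        _ = (Nat.card Gr : ℝ) *
              ((K⁻¹ * Q ^ ((d₁-k)*(m-d₁))) * (K⁻¹ * Q ^ ((d₂-k)*(m-d₂)))) := by
            rw [Finset.sum_const, Finset.card_univ, nsmul_eq_mul, Nat.card_eq_fintype_card]
        _ ≤ (K⁻¹ * Q ^ (k*(m-k))) *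
              ((K⁻¹ * Q ^ ((d₁-k)*(m-d₁))) * (K⁻¹ * Q ^ ((d₂-k)*(m-d₂)))) :=
            mul_le_mul_of_nonneg_right hGr_up (by positivity)
        _ = K⁻¹ ^ 3 * Q ^ (k*(m-k) + (d₁-k)*(m-d₁) + (d₂-k)*(m-d₂)) := by
            rw [pow_add, pow_add]; ring
    -- Step 3 : exponent splitting and geometric sum
    have hsplit : ∀ k ∈ Finset.Icc (a+1) d₂,
        Q ^ (k*(m-k) + (d₁-k)*(m-d₁) + (d₂-k)*(m-d₂)) =
          Q ^ ((k:ℤ)*((d₁:ℤ)+(d₂:ℤ)-(m:ℤ)-(k:ℤ))) * Q ^ (d₁*(m-d₁) + d₂*(m-d₂)) := by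
      intro k hk
      rw [Finset.mem_Icc] at hk
      obtain ⟨hka, hkd₂'⟩ := hk
      have hkd₁' : k ≤ d₁ := le_trans hkd₂' hd
      have hkm : k ≤ m := le_trans hkd₁' hd₁
      rw [← zpow_natCast Q (k*(m-k) + (d₁-k)*(m-d₁) + (d₂-k)*(m-d₂)),
        ← zpow_natCast Q (d₁*(m-d₁) + d₂*(m-d₂)), ← zpow_add₀ hQne]
      congr 1
      push_cast [Nat.cast_sub hkm, Nat.cast_sub hd₁, Nat.cast_sub hd₂,
        Nat.cast_sub hkd₁', Nat.cast_sub hkd₂']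
      ring
    have hterm : ∀ k ∈ Finset.Icc (a+1) d₂,
        Q ^ ((k:ℤ)*((d₁:ℤ)+(d₂:ℤ)-(m:ℤ)-(k:ℤ))) ≤ Q ^ fa * Q ^ (-3*((k:ℤ)-(a:ℤ))) := by
      intro k hk
      rw [Finset.mem_Icc] at hk
      obtain ⟨hka, hkd₂'⟩ := hk
      rw [← zpow_add₀ hQne]
      apply zpow_le_zpow_right₀ hQ1
      have h1 : (1:ℤ) ≤ (k:ℤ) - (a:ℤ) := by
        have : (a:ℤ) + 1 ≤ (k:ℤ) := by exact_mod_cast hka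
        omega
      have h2 : (d₁:ℤ)+(d₂:ℤ)-(m:ℤ)-(k:ℤ)-(a:ℤ) ≤ -3 := by
        have haZ : (1:ℤ) ≤ (a:ℤ) := by exact_mod_cast ha1
        omega
      have hprod := mul_le_mul_of_nonneg_left h2 (by linarith : (0:ℤ) ≤ (k:ℤ)-(a:ℤ))
      rw [hfa]
      nlinarith [hprod]
    have hhalf : ((Q⁻¹ : ℝ))^3 ≤ 1/2 := by
      have hinvle : (Q⁻¹ : ℝ) ≤ 1/2 := by
        rw [inv_le_comm₀ hQ0 (by norm_num)]
        linarith
      calc ((Q⁻¹ : ℝ))^3 ≤ Q⁻¹ := by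
            apply pow_le_of_le_one (by positivity) (by
              rw [inv_le_one_iff₀]; right; linarith) (by norm_num)
        _ ≤ 1/2 := hinvle
    have hgeo : ∑ k ∈ Finset.Icc (a+1) d₂, Q ^ (-3*((k:ℤ)-(a:ℤ))) ≤ 1 := by
      have hstep : ∑ k ∈ Finset.Icc (a+1) d₂, Q ^ (-3*((k:ℤ)-(a:ℤ))) =
          ∑ j ∈ Finset.range (d₂ - a), ((Q⁻¹)^3) ^ (j+1) := by
        refine Finset.sum_nbij' (fun k => k - (a+1)) (fun j => j + (a+1)) ?_ ?_ ?_ ?_ ?_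
        · intro x hx; rw [Finset.mem_Icc] at hx; rw [Finset.mem_range]; omega
        · intro x hx; rw [Finset.mem_range] at hx; rw [Finset.mem_Icc]; omega
        · intro x hx; rw [Finset.mem_Icc] at hx; omega
        · intro x hx; rw [Finset.mem_range] at hx; omega
        · intro x hx
          rw [Finset.mem_Icc] at hx
          have h1 : ((Q⁻¹)^3) ^ ((x - (a+1))+1) = (Q ^ (3*((x-(a+1))+1) : ℕ))⁻¹ := by
            rw [← pow_mul, inv_pow]
          rw [h1, ← zpow_natCast Q (3*((x-(a+1))+1)), ← zpow_neg]
          congr 1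
          omega
      rw [hstep]
      calc ∑ j ∈ Finset.range (d₂ - a), ((Q⁻¹)^3) ^ (j+1)
          ≤ ∑ j ∈ Finset.range (d₂ - a), (1/2:ℝ) ^ (j+1) :=
            Finset.sum_le_sum fun j _ => pow_le_pow_left₀ (by positivity) hhalf (j+1)
        _ = (1/2) * ∑ j ∈ Finset.range (d₂ - a), (1/2:ℝ) ^ j := by
            rw [Finset.mul_sum]
            exact Finset.sum_congr rfl fun j _ => by rw [pow_succ]; ring
        _ ≤ (1/2) * 2 := by
            have := sum_geometric_two_le (d₂ - a)
            linarith
        _ = 1 := by norm_num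
    -- Step 4 : put everything together
    have hfin : (Nat.card Bad : ℝ) ≤
        K⁻¹ ^ 3 * Q ^ fa * (Q ^ (d₁*(m-d₁)) * Q ^ (d₂*(m-d₂))) := by
      have hc0 : (Nat.card Bad : ℝ) ≤ ∑ k ∈ Finset.Icc (a+1) d₂, (Nat.card (S k) : ℝ) := by
        exact_mod_cast hstrat
      calc (Nat.card Bad : ℝ) ≤ ∑ k ∈ Finset.Icc (a+1) d₂, (Nat.card (S k) : ℝ) := hc0
        _ ≤ ∑ k ∈ Finset.Icc (a+1) d₂,
              K⁻¹ ^ 3 * Q ^ (k*(m-k) + (d₁-k)*(m-d₁) + (d₂-k)*(m-d₂)) :=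
            Finset.sum_le_sum hksum
        _ = K⁻¹ ^ 3 * ∑ k ∈ Finset.Icc (a+1) d₂,
              Q ^ ((k:ℤ)*((d₁:ℤ)+(d₂:ℤ)-(m:ℤ)-(k:ℤ))) * Q ^ (d₁*(m-d₁) + d₂*(m-d₂)) := by
            rw [Finset.mul_sum]
            exact Finset.sum_congr rfl fun k hk => by rw [hsplit k hk]
        _ ≤ K⁻¹ ^ 3 * ∑ k ∈ Finset.Icc (a+1) d₂,
              (Q ^ fa * Q ^ (-3*((k:ℤ)-(a:ℤ)))) * Q ^ (d₁*(m-d₁) + d₂*(m-d₂)) := by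
            apply mul_le_mul_of_nonneg_left _ (by positivity)
            apply Finset.sum_le_sum
            intro k hk
            exact mul_le_mul_of_nonneg_right (hterm k hk) (by positivity)
        _ = K⁻¹ ^ 3 * (Q ^ fa * Q ^ (d₁*(m-d₁) + d₂*(m-d₂))) *
              ∑ k ∈ Finset.Icc (a+1) d₂, Q ^ (-3*((k:ℤ)-(a:ℤ))) := by
            rw [Finset.mul_sum, Finset.mul_sum]
            exact Finset.sum_congr rfl fun k hk => by ring
        _ ≤ K⁻¹ ^ 3 * (Q ^ fa * Q ^ (d₁*(m-d₁) + d₂*(m-d₂))) * 1 := by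
            apply mul_le_mul_of_nonneg_left hgeo (by positivity)
        _ = K⁻¹ ^ 3 * Q ^ fa * (Q ^ (d₁*(m-d₁)) * Q ^ (d₂*(m-d₂))) := by
            rw [pow_add]; ring
    calc (Nat.card Bad : ℝ)
        ≤ K⁻¹ ^ 3 * Q ^ fa * (Q ^ (d₁*(m-d₁)) * Q ^ (d₂*(m-d₂))) := hfin
      _ ≤ K⁻¹ ^ 3 * Q ^ fa * ((Nat.card PU : ℝ) * (Nat.card PV : ℝ)) := by
          apply mul_le_mul_of_nonneg_left _ (by positivity)
          exact mul_le_mul hN1 hN2 (by positivity) hN10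
      _ = K⁻¹ ^ 3 * Q ^ fa * (Nat.card PU : ℝ) * (Nat.card PV : ℝ) := by ring
end

section
/- For every prime power q and positive integers c, ℓ, and L ≤ q^ℓ, and every subset S ⊆ F_q^ℓ with |S| = L, there exists w ∈ F_q^ℓ such that S + w contains a c-increasing sequence of length at least (1/c)·log_q(L/2) − (1 − 1/c)·log_q((q−1)ℓ). -/
/-
Let `B` be the Hamming ball of radius `c - 1` about `0`; it has at most `2 ((q-1)ℓ)^(c-1)` points.
If `|S| > |B|`, a compression argument produces a set `A` of `c` coordinates and a pattern `β`
on `A` whose fibre `{t ∈ S | t = β on A}` has at least `|S| / q^c` points, together with some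
`x ∈ S` that differs from `β` at every coordinate of `A`: scan the coordinates following the
majority value of the current class, shrinking the class to its majority fibre whenever `x`
deviates; an `x` with fewer than `c` deviations is determined by its deviation vector, which lies
in `B`. Recursing into the fibre and appending `x` yields, after the shift by `-z` with `z = β` on
`A`, a `c`-increasing sequence of length `n` with `|S| ≤ |B| q^(cn)`; taking `log_q` gives the
bound.
-/

open scoped Classical

open Finset Function

lemma Finset.exists_card_le_mul_card_fiber {α β : Type*} [Fintype β] [Nonempty β]
    (s : Finset α) (f : α → β) : ∃ y, #s ≤ Fintype.card β * #{x ∈ s | f x = y} := by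
  obtain ⟨y, -, hy⟩ := exists_le_of_sum_le (s := univ) univ_nonempty
    (f := fun _ => #s) (g := fun y => Fintype.card β * #{x ∈ s | f x = y}) <| by
      rw [sum_const, card_univ, smul_eq_mul, ← mul_sum,
        ← card_eq_sum_card_fiberwise fun x _ => mem_univ (f x)]
  exact ⟨y, hy⟩

noncomputable section

namespace CIncreasing

section Support

variable {ι F : Type*} [Fintype ι] [Zero F]

def supp (δ : ι → F) : Finset ι := {a | δ a ≠ 0}

@[simp] lemma mem_supp {δ : ι → F} {a : ι} : a ∈ supp δ ↔ δ a ≠ 0 := by simp [supp]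

lemma supp_update_subset (δ : ι → F) (a : ι) (y : F) :
    supp (update δ a y) ⊆ insert a (supp δ) := by
  intro b hb
  rcases eq_or_ne b a with rfl | hba
  · exact mem_insert_self _ _
  · simp_all

lemma supp_update_of_ne_zero {δ : ι → F} {a : ι} {y : F} (hy : y ≠ 0) :
    supp (update δ a y) = insert a (supp δ) := by
  ext b
  rcases eq_or_ne b a with rfl | hba <;> simp_all

lemma card_supp_update_of_apply_eq_zero {δ : ι → F} {a : ι} {y : F} (ha : δ a = 0)
    (hy : y ≠ 0) : #(supp (update δ a y)) = #(supp δ) + 1 := by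
  rw [supp_update_of_ne_zero hy, card_insert_of_notMem (by simpa using ha)]

variable [Fintype F]

def ball (c : ℕ) : Finset (ι → F) := {δ | #(supp δ) < c}

lemma card_supp_eq_le (A : Finset ι) :
    #{δ : ι → F | supp δ = A} ≤ (Fintype.card F - 1) ^ #A := by
  calc #{δ : ι → F | supp δ = A}
      ≤ #(Fintype.piFinset fun _ : A => ({0}ᶜ : Finset F)) := by
        refine card_le_card_of_injOn (fun δ a => δ a) (fun δ hδ => ?_)
          fun δ hδ δ' hδ' h => ?_
        · simp_all [← (mem_filter.1 hδ).2]
        · simp only [coe_filter, mem_univ, true_and, Set.mem_ofPred_eq] at hδ hδ'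
          funext a
          by_cases ha : a ∈ A
          · exact congrFun h ⟨a, ha⟩
          · have h₁ : a ∉ supp δ := hδ ▸ ha
            have h₂ : a ∉ supp δ' := hδ' ▸ ha
            simp only [mem_supp, not_not] at h₁ h₂
            rw [h₁, h₂]
    _ = (Fintype.card F - 1) ^ #A := by simp [card_compl]

lemma card_supp_card_eq_le (k : ℕ) :
    #{δ : ι → F | #(supp δ) = k} ≤ ((Fintype.card F - 1) * Fintype.card ι) ^ k := by
  calc #{δ : ι → F | #(supp δ) = k}
      ≤ #((powersetCard k univ).biUnion fun A => {δ : ι → F | supp δ = A}) :=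
        card_le_card fun δ hδ => by simp_all
    _ ≤ ∑ A ∈ powersetCard k univ, #{δ : ι → F | supp δ = A} := card_biUnion_le
    _ ≤ ∑ A ∈ powersetCard k (univ : Finset ι), (Fintype.card F - 1) ^ k :=
        sum_le_sum fun A hA => (card_supp_eq_le A).trans_eq <| by rw [(mem_powersetCard.1 hA).2]
    _ ≤ ((Fintype.card F - 1) * Fintype.card ι) ^ k := by
        rw [sum_const, card_powersetCard, card_univ, smul_eq_mul, mul_pow, mul_comm]
        exact Nat.mul_le_mul_left _ (Nat.choose_le_pow _ _)

lemma card_ball_le_sum (c : ℕ) :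
    #(ball c : Finset (ι → F)) ≤
      ∑ k ∈ range c, ((Fintype.card F - 1) * Fintype.card ι) ^ k := by
  rw [card_eq_sum_card_fiberwise (f := fun δ => #(supp δ)) (t := range c)
    fun δ hδ => by simpa [ball] using hδ]
  exact sum_le_sum fun k _ =>
    (card_le_card fun δ hδ => by simp_all [ball]).trans (card_supp_card_eq_le k)

lemma card_ball_le [Nontrivial F] [Nonempty ι] (c : ℕ) :
    #(ball c : Finset (ι → F)) ≤ 2 * ((Fintype.card F - 1) * Fintype.card ι) ^ (c - 1) := by
  have hF : 1 < Fintype.card F := Fintype.one_lt_card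
  have hι : 0 < Fintype.card ι := Fintype.card_pos
  obtain hM | hM : (Fintype.card F - 1) * Fintype.card ι = 1 ∨
      2 ≤ (Fintype.card F - 1) * Fintype.card ι := by
    have := Nat.mul_le_mul (Nat.le_sub_of_add_le hF : 1 ≤ Fintype.card F - 1) hι
    omega
  · obtain ⟨hF₁, hι₁⟩ := mul_eq_one.1 hM
    calc #(ball c : Finset (ι → F)) ≤ Fintype.card (ι → F) := card_le_univ _
      _ = 2 * ((Fintype.card F - 1) * Fintype.card ι) ^ (c - 1) := by
        rw [hM, Fintype.card_fun, hι₁]; simp; omega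
  · refine (card_ball_le_sum c).trans ?_
    rcases c with _ | c
    · simp
    · rw [sum_range_succ, Nat.add_sub_cancel, two_mul]
      exact Nat.add_le_add_right (Nat.geomSum_lt hM fun k hk => mem_range.1 hk).le _

end Support

section Fiber

variable {ι F : Type*}

def fiber (C : Finset (ι → F)) (A : Finset ι) (β : ι → F) : Finset (ι → F) :=
  {t ∈ C | ∀ a ∈ A, t a = β a}

lemma fiber_subset (C : Finset (ι → F)) (A : Finset ι) (β : ι → F) : fiber C A β ⊆ C :=
  filter_subset _ _

lemma fiber_insert (C : Finset (ι → F)) (A : Finset ι) (β : ι → F) (b : ι) :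
    fiber C (insert b A) β = fiber {t ∈ C | t b = β b} A β := by
  ext t
  simp [fiber, and_assoc]

lemma fiber_congr (C : Finset (ι → F)) (A : Finset ι) {β β' : ι → F}
    (h : ∀ a ∈ A, β a = β' a) : fiber C A β = fiber C A β' :=
  filter_congr fun t _ => forall₂_congr fun a ha => by rw [h a ha]

end Fiber

section Deviation

variable {ι F : Type*} [AddCommGroup F] [Fintype F]

def majority (C : Finset (ι → F)) (a : ι) : F :=
  (exists_card_le_mul_card_fiber C fun t => t a).choose

lemma card_le_mul_card_majority (C : Finset (ι → F)) (a : ι) :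
    #C ≤ Fintype.card F * #{t ∈ C | t a = majority C a} :=
  (exists_card_le_mul_card_fiber C fun t => t a).choose_spec

/-- Scanning the coordinates `as` in order, record `x a - majority C a` wherever `x` leaves the
majority value of the current class `C`, and then shrink `C` to its majority fibre at `a`;
stop after `k` such deviations. -/
def deviation : List ι → Finset (ι → F) → ℕ → (ι → F) → ι → F
  | [], _, _, _ => 0
  | _ :: _, _, 0, _ => 0
  | a :: as, C, k + 1, x =>
    if x a = majority C a then deviation as C (k + 1) x
    else update (deviation as {t ∈ C | t a = majority C a} k x) a (x a - majority C a)

lemma deviation_apply_of_notMem {as : List ι} {a : ι} (ha : a ∉ as) (C : Finset (ι → F))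
    (k : ℕ) (x : ι → F) : deviation as C k x a = 0 := by
  induction as generalizing C k with
  | nil => rfl
  | cons b as ih =>
    rw [List.mem_cons, not_or] at ha
    rcases k with _ | k
    · rfl
    · simp only [deviation]
      split_ifs
      · exact ih ha.2 _ _
      · rw [update_of_ne ha.1, ih ha.2]

lemma deviation_cons_apply_self {as : List ι} {b : ι} (hb : b ∉ as) (C : Finset (ι → F))
    (k : ℕ) (x : ι → F) : deviation (b :: as) C (k + 1) x b = x b - majority C b := by
  simp only [deviation]
  split_ifs with h
  · rw [deviation_apply_of_notMem hb, h, sub_self]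
  · rw [update_self]

variable [Fintype ι]

lemma card_supp_deviation_le (as : List ι) (C : Finset (ι → F)) (k : ℕ) (x : ι → F) :
    #(supp (deviation as C k x)) ≤ k := by
  induction as generalizing C k with
  | nil => simp [deviation, supp]
  | cons b as ih =>
    rcases k with _ | k
    · simp [deviation, supp]
    · simp only [deviation]
      split_ifs
      · exact ih _ _
      · exact (card_le_card (supp_update_subset _ _ _)).trans
          ((card_insert_le _ _).trans (Nat.add_le_add_right (ih _ _) 1))

lemma eqOn_of_deviation_eq {as : List ι} (has : as.Nodup) {C : Finset (ι → F)} {k : ℕ}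
    {x y : ι → F} (hxy : deviation as C k x = deviation as C k y)
    (hk : #(supp (deviation as C k x)) < k) : ∀ a ∈ as, x a = y a := by
  induction as generalizing C k with
  | nil => simp
  | cons b as ih =>
    obtain ⟨hb, has⟩ := List.nodup_cons.1 has
    rcases k with _ | k
    · exact absurd hk (Nat.not_lt_zero _)
    have hxyb : x b = y b := by
      simpa [deviation_cons_apply_self hb] using congrFun hxy b
    suffices ∀ a ∈ as, x a = y a by simpa [hxyb]
    simp only [deviation, hxyb] at hxy hk
    split_ifs at hxy hk with h
    · exact ih has hxy hk
    · have hne : y b - majority C b ≠ 0 := sub_ne_zero.2 h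
      rw [card_supp_update_of_apply_eq_zero (deviation_apply_of_notMem hb _ _ _) hne] at hk
      refine ih has (C := {t ∈ C | t b = majority C b}) (k := k) ?_ (by omega)
      funext a
      rcases eq_or_ne a b with rfl | hab
      · rw [deviation_apply_of_notMem hb, deviation_apply_of_notMem hb]
      · simpa [update_of_ne hab] using congrFun hxy a

lemma card_le_pow_mul_card_fiber_deviation {as : List ι} (has : as.Nodup)
    (C : Finset (ι → F)) (k : ℕ) (x : ι → F) :
    #C ≤ Fintype.card F ^ #(supp (deviation as C k x)) *
      #(fiber C (supp (deviation as C k x)) (x - deviation as C k x)) := by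
  induction as generalizing C k with
  | nil => simp [deviation, supp, fiber]
  | cons b as ih =>
    obtain ⟨hb, has⟩ := List.nodup_cons.1 has
    rcases k with _ | k
    · simp [deviation, supp, fiber]
    simp only [deviation]
    split_ifs with h
    · exact ih has _ _
    set C' : Finset (ι → F) := {t ∈ C | t b = majority C b}
    set δ := deviation as C' k x
    have hδb : δ b = 0 := deviation_apply_of_notMem hb _ _ _
    have hfiber : fiber C (insert b (supp δ)) (x - update δ b (x b - majority C b)) =
        fiber C' (supp δ) (x - δ) := by
      rw [fiber_insert, show (x - update δ b (x b - majority C b)) b = majority C b by simp]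
      refine fiber_congr _ _ fun a ha => ?_
      have hab : a ≠ b := by rintro rfl; simp_all
      simp only [Pi.sub_apply, update_of_ne hab]
    rw [card_supp_update_of_apply_eq_zero hδb (sub_ne_zero.2 h),
      supp_update_of_ne_zero (sub_ne_zero.2 h), hfiber, pow_succ, mul_comm _ (Fintype.card F),
      mul_assoc]
    exact (card_le_mul_card_majority C b).trans (Nat.mul_le_mul_left _ (ih has _ _))

lemma exists_fiber_of_card_ball_lt {c : ℕ} {S : Finset (ι → F)}
    (hS : #(ball c : Finset (ι → F)) < #S) :
    ∃ A β, #A = c ∧ (∃ x ∈ S, ∀ a ∈ A, x a ≠ β a) ∧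
      #S ≤ Fintype.card F ^ c * #(fiber S A β) := by
  set δ := fun x => deviation univ.toList S c x
  obtain ⟨x, hxS, hx⟩ : ∃ x ∈ S, c ≤ #(supp (δ x)) := by
    by_contra! h
    have hinj : Set.InjOn δ S := fun x hx y _ hxy => funext fun a =>
      eqOn_of_deviation_eq (nodup_toList _) hxy (h x hx) a (mem_toList.2 (mem_univ a))
    exact hS.not_ge (card_le_card_of_injOn δ (fun x hx => by simpa [ball] using h x hx) hinj)
  have hc : #(supp (δ x)) = c := (card_supp_deviation_le _ _ _ x).antisymm hx
  refine ⟨supp (δ x), x - δ x, hc,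
    ⟨x, hxS, fun a ha h => mem_supp.1 ha (by simpa using h.symm)⟩, hc ▸ ?_⟩
  exact card_le_pow_mul_card_fiber_deviation (nodup_toList _) S c x

end Deviation

section Chain

variable {ι F : Type*}

/-- Read in order, the pairs `(x, A)` of `l` give the sequence of vectors `x - z`, where `A` is a
set of `c` coordinates in the support of `x - z` and outside the supports of the earlier vectors.
`nonconst` keeps the sets `A` of a chain inside a fibre of `S` disjoint from the coordinates that
the fibre fixes. -/
structure IsChain (c : ℕ) (S : Finset (ι → F)) (z : ι → F)
    (l : List ((ι → F) × Finset ι)) : Prop where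
  mem : ∀ p ∈ l, p.1 ∈ S
  card_eq : ∀ p ∈ l, #p.2 = c
  apply_ne : ∀ p ∈ l, ∀ a ∈ p.2, p.1 a ≠ z a
  nonconst : ∀ p ∈ l, ∀ a ∈ p.2, ∃ s ∈ S, ∃ t ∈ S, s a ≠ t a
  pairwise : l.Pairwise fun p q => ∀ a ∈ q.2, p.1 a = z a

lemma IsChain.nil (c : ℕ) (S : Finset (ι → F)) (z : ι → F) : IsChain c S z [] :=
  ⟨by simp, by simp, by simp, by simp, List.Pairwise.nil⟩

lemma IsChain.append_fiber {c : ℕ} {S : Finset (ι → F)} {A : Finset ι} {β z x : ι → F}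
    {l : List ((ι → F) × Finset ι)} (hl : IsChain c (fiber S A β) z l) (hA : #A = c)
    (hx : x ∈ S) (hxβ : ∀ a ∈ A, x a ≠ β a) (hne : (fiber S A β).Nonempty) :
    IsChain c S (A.piecewise β z) (l ++ [(x, A)]) := by
  have hfib : ∀ t ∈ fiber S A β, t ∈ S ∧ ∀ a ∈ A, t a = β a := fun t ht => by
    simpa [fiber] using ht
  have hdisj : ∀ p ∈ l, ∀ a ∈ p.2, a ∉ A := fun p hp a ha haA => by
    obtain ⟨s, hs, t, ht, hst⟩ := hl.nonconst p hp a ha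
    exact hst (((hfib s hs).2 a haA).trans ((hfib t ht).2 a haA).symm)
  obtain ⟨t₀, ht₀⟩ := hne
  have hmem {P : (ι → F) × Finset ι → Prop} (hl : ∀ p ∈ l, P p) (hx : P (x, A)) :
      ∀ p ∈ l ++ [(x, A)], P p :=
    List.forall_mem_append.2 ⟨hl, List.forall_mem_singleton.2 hx⟩
  refine ⟨hmem (fun p hp => (hfib _ (hl.mem p hp)).1) hx, hmem hl.card_eq hA,
    hmem (fun p hp a ha => ?_) fun a ha => ?_, hmem (fun p hp a ha => ?_) fun a ha => ?_, ?_⟩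
  · rw [piecewise_eq_of_notMem _ _ _ (hdisj p hp a ha)]
    exact hl.apply_ne p hp a ha
  · rw [piecewise_eq_of_mem _ _ _ ha]
    exact hxβ a ha
  · obtain ⟨s, hs, t, ht, hst⟩ := hl.nonconst p hp a ha
    exact ⟨s, (hfib s hs).1, t, (hfib t ht).1, hst⟩
  · refine ⟨x, hx, t₀, (hfib t₀ ht₀).1, ?_⟩
    rw [(hfib t₀ ht₀).2 a ha]
    exact hxβ a ha
  refine List.pairwise_append.2 ⟨hl.pairwise.imp_of_mem fun _ hq h a ha => ?_,
    List.pairwise_singleton _ _, fun p hp q hq a ha => ?_⟩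
  · rw [piecewise_eq_of_notMem _ _ _ (hdisj _ hq a ha)]
    exact h a ha
  · rw [List.mem_singleton.1 hq] at ha
    rw [piecewise_eq_of_mem _ _ _ ha]
    exact (hfib _ (hl.mem p hp)).2 a ha

lemma IsChain.le_ncard_support_diff [Finite ι] [AddGroup F] {c : ℕ} {S : Finset (ι → F)}
    {z : ι → F} {l : List ((ι → F) × Finset ι)} (hl : IsChain c S z l) (j : Fin l.length) :
    c ≤ (support ((l.get j).1 - z) \
      ⋃ (i : Fin l.length) (_ : i < j), support ((l.get i).1 - z)).ncard := by
  rw [← hl.card_eq _ (l.get_mem j), ← Set.ncard_coe_finset]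
  refine Set.ncard_le_ncard (fun a ha => ⟨?_, ?_⟩) (Set.toFinite _)
  · simpa [sub_eq_zero] using hl.apply_ne _ (l.get_mem j) a ha
  · simp only [Set.mem_iUnion, mem_support, Pi.sub_apply, ne_eq, sub_eq_zero, not_exists,
      not_not]
    exact fun i hij => List.pairwise_iff_get.1 hl.pairwise i j hij a ha

lemma exists_isChain [Fintype ι] [AddCommGroup F] [Fintype F] {c : ℕ} (hc : 0 < c)
    (S : Finset (ι → F)) :
    ∃ z l, IsChain c S z l ∧
      #S ≤ #(ball c : Finset (ι → F)) * Fintype.card F ^ (c * l.length) := by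
  induction S using Finset.strongInduction with
  | H S ih =>
  by_cases hS : #S ≤ #(ball c : Finset (ι → F))
  · exact ⟨0, [], IsChain.nil c S 0, by simpa⟩
  obtain ⟨A, β, hA, ⟨x, hxS, hxβ⟩, hcard⟩ := exists_fiber_of_card_ball_lt (not_le.1 hS)
  have hx : x ∉ fiber S A β := by
    obtain ⟨a, ha⟩ := card_pos.1 (hA ▸ hc)
    simpa [fiber] using fun _ => ⟨a, ha, hxβ a ha⟩
  obtain ⟨z, l, hl, hl_card⟩ :=
    ih _ ((ssubset_iff_of_subset (fiber_subset S A β)).2 ⟨x, hxS, hx⟩)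
  have hne : (fiber S A β).Nonempty := card_pos.1 <| Nat.pos_of_ne_zero fun h => hS (by simp_all)
  refine ⟨A.piecewise β z, l ++ [(x, A)], hl.append_fiber hA hxS hxβ hne, ?_⟩
  calc #S ≤ Fintype.card F ^ c * #(fiber S A β) := hcard
    _ ≤ Fintype.card F ^ c * (#(ball c : Finset (ι → F)) * Fintype.card F ^ (c * l.length)) :=
      Nat.mul_le_mul_left _ hl_card
    _ = #(ball c : Finset (ι → F)) * Fintype.card F ^ (c * (l ++ [(x, A)]).length) := by
      rw [List.length_append, List.length_singleton, mul_add_one, pow_add]; ring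

end Chain

end CIncreasing

end

lemma one_div_mul_logb_sub_le {q M L : ℝ} {c n : ℕ} (hq : 1 < q) (hc : 0 < c) (hM : 0 < M)
    (hL : 0 < L) (h : L ≤ 2 * M ^ (c - 1) * q ^ (c * n)) :
    1 / (c : ℝ) * Real.logb q (L / 2) - (1 - 1 / (c : ℝ)) * Real.logb q M ≤ n := by
  have hc' : (0 : ℝ) < c := Nat.cast_pos.2 hc
  have key : Real.logb q (L / 2) ≤ (c - 1) * Real.logb q M + c * n := calc
    Real.logb q (L / 2) ≤ Real.logb q (M ^ (c - 1) * q ^ (c * n)) :=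
      Real.logb_le_logb_of_le hq (by positivity) (by linarith)
    _ = (c - 1) * Real.logb q M + c * n := by
      rw [Real.logb_mul (by positivity) (by positivity), Real.logb_pow, Real.logb_pow,
        Real.logb_self_eq_one hq, Nat.cast_pred hc]
      push_cast
      ring
  have : 1 / (c : ℝ) * ((c - 1) * Real.logb q M + c * n) = (1 - 1 / c) * Real.logb q M + n := by
    field_simp
  nlinarith [mul_le_mul_of_nonneg_left key (one_div_nonneg.2 hc'.le)]

theorem c_increasing_sequence_general (q c ℓ L : ℕ) (F : Type) [Field F] [Fintype F]
    (hq : Fintype.card F = q) (hc : 0 < c) (hℓ : 0 < ℓ) (hL : 0 < L)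
    (S : Finset (Fin ℓ → F)) (hS : S.card = L) :
    ∃ (w : Fin ℓ → F) (d : ℕ) (v : Fin d → Fin ℓ → F),
      (∀ i, v i ∈ Finset.image (fun s => s + w) S) ∧
      (∀ j : Fin d,
        c ≤ (Function.support (v j) \
              ⋃ (i : Fin d) (_ : i < j), Function.support (v i)).ncard) ∧
      (1 / (c : ℝ)) * Real.logb q ((L : ℝ) / 2) -
          (1 - 1 / (c : ℝ)) * Real.logb q (((q : ℝ) - 1) * ℓ) ≤ (d : ℝ) := by
  subst hq hS
  have : Nonempty (Fin ℓ) := ⟨⟨0, hℓ⟩⟩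
  have hF : 1 < Fintype.card F := Fintype.one_lt_card
  obtain ⟨z, l, hl, hcard⟩ := CIncreasing.exists_isChain hc S
  refine ⟨-z, l.length, fun k => (l.get k).1 - z,
    fun k => mem_image.2 ⟨_, hl.mem _ (l.get_mem k), (sub_eq_add_neg _ _).symm⟩,
    hl.le_ncard_support_diff, ?_⟩
  refine one_div_mul_logb_sub_le (by exact_mod_cast hF) hc ?_ (by exact_mod_cast hL) ?_
  · exact mul_pos (sub_pos.2 (by exact_mod_cast hF)) (by exact_mod_cast hℓ)
  · have h := hcard.trans (Nat.mul_le_mul_right _ (CIncreasing.card_ball_le (ι := Fin ℓ) c))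
    rw [Fintype.card_fin] at h
    have : (((Fintype.card F - 1) * ℓ : ℕ) : ℝ) = ((Fintype.card F : ℝ) - 1) * ℓ := by
      push_cast [Nat.cast_sub hF.le]; ring
    rw [← this]
    exact_mod_cast h

/-- Sauer–Shelah style lemma: for every prime power `q`, positive integers `c, ℓ`,
`L ≤ q^ℓ`, and every `S ⊆ F_q^ℓ` with `|S| = L`, there is `w` such that `S + w`
contains a `c`-increasing sequence of length at least
`(1/c)·log_q(L/2) − (1 − 1/c)·log_q((q−1)ℓ)`. -/
theorem c_increasing_sequence (q c ℓ L : ℕ) (F : Type) [Field F] [Fintype F]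
    (hq : Fintype.card F = q) (hc : 0 < c) (hℓ : 0 < ℓ) (hL : 0 < L) (hLq : L ≤ q ^ ℓ)
    (S : Finset (Fin ℓ → F)) (hS : S.card = L) :
    ∃ (w : Fin ℓ → F) (d : ℕ) (v : Fin d → Fin ℓ → F),
      (∀ i, v i ∈ Finset.image (fun s => s + w) S) ∧
      (∀ j : Fin d,
        c ≤ (Function.support (v j) \
              ⋃ (i : Fin d) (_ : i < j), Function.support (v i)).ncard) ∧
      (1 / (c : ℝ)) * Real.logb q ((L : ℝ) / 2) -
          (1 - 1 / (c : ℝ)) * Real.logb q (((q : ℝ) - 1) * ℓ) ≤ (d : ℝ) :=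
  c_increasing_sequence_general q c ℓ L F hq hc hℓ hL S hS
end

section
/- Let ε > 0, ρ ∈ (0,1), n ≤ m, b = n/m. A random code C ⊆ F_q^{m×n} of rate R = (1−ρ)(1−bρ) − ε (each matrix included independently with probability q^{(R−1)mn}) is (ρ, O(1/ε)) list-decodable with probability at least 1 − q^{−Θ(mn)}, for m, n sufficiently large compared to 1/ε. -/
open scoped Classical

set_option maxHeartbeats 1000000


lemma bern_total {α : Type*} (p : ℝ) (s : Finset α) :
    ∑ t ∈ s.powerset, p ^ t.card * (1 - p) ^ (s.card - t.card) = 1 := by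
  calc (∑ t ∈ s.powerset, p ^ t.card * (1 - p) ^ (s.card - t.card))
      = ∑ t ∈ s.powerset, (∏ _i ∈ t, p) * ∏ _i ∈ s \ t, (1 - p) :=
        Finset.sum_congr rfl (fun t ht => by
          rw [Finset.prod_const, Finset.prod_const,
            Finset.card_sdiff_of_subset (Finset.mem_powerset.mp ht)])
    _ = ∏ _i ∈ s, (p + (1 - p)) := (Finset.prod_add _ _ s).symm
    _ = 1 := by simp

lemma bern_upset {α : Type*} [Fintype α] (p : ℝ) (S : Finset α)
    [∀ C : Finset α, Decidable (S ⊆ C)] :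
    ∑ C : Finset α, (if S ⊆ C then p ^ C.card * (1 - p) ^ (Fintype.card α - C.card) else 0)
      = p ^ S.card := by
  classical
  rw [← Finset.sum_filter]
  have hre : ∑ C ∈ Finset.univ.filter (fun C : Finset α => S ⊆ C),
      p ^ C.card * (1 - p) ^ (Fintype.card α - C.card)
      = ∑ D ∈ Sᶜ.powerset, p ^ (S.card + D.card) * (1 - p) ^ ((Fintype.card α - S.card) - D.card) := by
    refine Finset.sum_nbij' (fun C => C \ S) (fun D => S ∪ D) ?_ ?_ ?_ ?_ ?_
    · intro C hC
      simp only [Finset.mem_powerset]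
      intro x hx
      simp only [Finset.mem_sdiff] at hx
      simp [Finset.mem_compl, hx.2]
    · intro D hD
      simp
    · intro C hC
      simp only [Finset.mem_filter] at hC
      exact Finset.union_sdiff_of_subset hC.2
    · intro D hD
      simp only [Finset.mem_powerset] at hD
      have hdisj : Disjoint S D := Finset.disjoint_left.mpr (fun a haS haD => by
        have := hD haD; simp only [Finset.mem_compl] at this; exact this haS)
      exact Finset.union_sdiff_cancel_left hdisj
    · intro C hC
      simp only [Finset.mem_filter] at hC
      have hcard : C.card = S.card + (C \ S).card := by
        have := Finset.card_sdiff_add_card_eq_card hC.2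
        omega
      have h2 : Fintype.card α - C.card = (Fintype.card α - S.card) - (C \ S).card := by
        have h3 := Finset.card_le_univ C
        omega
      rw [h2, hcard]
  rw [hre]
  have : ∀ D ∈ Sᶜ.powerset, p ^ (S.card + D.card) * (1 - p) ^ ((Fintype.card α - S.card) - D.card)
      = p ^ S.card * (p ^ D.card * (1 - p) ^ (Sᶜ.card - D.card)) := by
    intro D hD
    rw [pow_add, Finset.card_compl, mul_assoc]
  rw [Finset.sum_congr rfl this, ← Finset.mul_sum, bern_total, mul_one]


lemma card_fixzero {α γ : Type*} [Fintype α] [Fintype γ] [Zero γ] (s : Finset α)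
    [Fintype {f : α → γ // ∀ x ∈ s, f x = 0}] :
    Fintype.card {f : α → γ // ∀ x ∈ s, f x = 0} = Fintype.card γ ^ (Fintype.card α - s.card) := by
  classical
  have e : {f : α → γ // ∀ x ∈ s, f x = 0} ≃ ({x : α // x ∉ s} → γ) :=
    { toFun := fun f x => f.1 x.1
      invFun := fun g => ⟨fun x => if h : x ∈ s then 0 else g ⟨x, h⟩, fun x hx => dif_pos hx⟩
      left_inv := fun f => by
        ext x
        by_cases h : x ∈ s
        · simp [h, (f.2 x h).symm]
        · simp [h]
      right_inv := fun g => by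
        funext x
        simp [x.2] }
  rw [Fintype.card_congr e, Fintype.card_fun]
  congr 1
  rw [Fintype.card_subtype_compl]
  congr 1
  simp [Fintype.card_subtype]

lemma rank_count (F : Type) [Field F] [Fintype F] (m n r : ℕ) (hrn : r ≤ n) (hnm : n ≤ m) (hm : 1 ≤ m) :
    (Finset.univ.filter (fun M : Matrix (Fin m) (Fin n) F => M.rank ≤ r)).card
      ≤ (r + 1) * m ^ r * (Fintype.card F) ^ (r * n + r * (m - r)) := by
  classical
  -- the data type
  let D : Type := Σ k : Fin (r + 1), Σ σ : Fin (k : ℕ) ↪ Fin m,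
    (Matrix (Fin (k : ℕ)) (Fin n) F) × {A : Matrix (Fin m) (Fin (k : ℕ)) F // ∀ i, A (σ i) = 0}
  let φ : D → Matrix (Fin m) (Fin n) F := fun d =>
    Matrix.of (fun x j => if h : ∃ i, d.2.1 i = x then d.2.2.1 h.choose j
      else ∑ i, (d.2.2.2 : Matrix (Fin m) (Fin (d.1 : ℕ)) F) x i * d.2.2.1 i j)
  have hsurj : Set.SurjOn φ ↑(Finset.univ : Finset D)
      ↑(Finset.univ.filter (fun M : Matrix (Fin m) (Fin n) F => M.rank ≤ r)) := by
    intro M hM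
    simp only [Finset.coe_filter, Set.mem_setOf_eq, Finset.mem_univ, true_and] at hM
    -- pick a basis of the row space among the rows
    obtain ⟨b, hbsub, hbspan, hbli⟩ := exists_linearIndependent F (Set.range (M : Fin m → Fin n → F))
    haveI : Fintype b := Set.Finite.fintype (Set.toFinite b)
    have hk : Fintype.card b ≤ r := by
      have h1 : Module.finrank F (Submodule.span F b) = b.toFinset.card :=
        finrank_span_set_eq_card hbli
      have h2 : M.rank = Module.finrank F (Submodule.span F (Set.range M)) :=
        M.rank_eq_finrank_span_row
      rw [← hbspan, h1, Set.toFinset_card] at h2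
      omega
    set k : ℕ := Fintype.card b with hkdef
    let e : Fin k ≃ b := (Fintype.equivFin b).symm
    let σf : Fin k → Fin m := fun i => (hbsub (e i).2).choose
    have hσ : ∀ i, M (σf i) = ((e i : b) : Fin n → F) := fun i => (hbsub (e i).2).choose_spec
    have σinj : Function.Injective σf := by
      intro i i' h
      have h2 : ((e i : b) : Fin n → F) = ((e i' : b) : Fin n → F) := by
        rw [← hσ i, ← hσ i', h]
      exact e.injective (Subtype.ext h2)
    have hrangeB : Set.range (fun i : Fin k => ((e i : b) : Fin n → F)) = b := by
      ext v
      constructor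
      · rintro ⟨i, rfl⟩; exact (e i).2
      · intro hv; exact ⟨e.symm ⟨v, hv⟩, by simp⟩
    have hspan : ∀ x : Fin m, ∃ c : Fin k → F,
        (∑ i, c i • ((e i : b) : Fin n → F)) = M x := by
      intro x
      have hx : (M x : Fin n → F) ∈ Submodule.span F b := by
        rw [hbspan]; exact Submodule.subset_span ⟨x, rfl⟩
      rw [← hrangeB] at hx
      exact (Submodule.mem_span_range_iff_exists_fun F).mp hx
    let A : Matrix (Fin m) (Fin k) F :=
      Matrix.of (fun x => if h : ∃ i, σf i = x then 0 else (hspan x).choose)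
    have hA : ∀ i, A (σf i) = 0 := fun i => dif_pos ⟨i, rfl⟩
    refine ⟨⟨⟨k, by omega⟩, ⟨σf, σinj⟩, Matrix.of (fun i => ((e i : b) : Fin n → F)),
      ⟨A, hA⟩⟩, Finset.mem_coe.mpr (Finset.mem_univ _), ?_⟩
    ext x j
    show (if h : ∃ i, σf i = x then _ else _) = M x j
    by_cases h : ∃ i, σf i = x
    · rw [dif_pos h]
      show ((e h.choose : b) : Fin n → F) j = M x j
      rw [← hσ h.choose, h.choose_spec]
    · rw [dif_neg h]
      show (∑ i, A x i * ((e i : b) : Fin n → F) j) = M x j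
      have hc := (hspan x).choose_spec
      have hc2 := congrFun hc j
      rw [Finset.sum_apply] at hc2
      simp only [Pi.smul_apply, smul_eq_mul] at hc2
      rw [← hc2]
      refine Finset.sum_congr rfl (fun i _ => ?_)
      have : A x = (hspan x).choose := dif_neg h
      rw [this]
  have hcard := Finset.card_le_card_of_surjOn φ hsurj
  rw [Finset.card_univ] at hcard
  refine hcard.trans ?_
  -- compute the cardinality of D
  have hq1 : 1 ≤ Fintype.card F := Fintype.card_pos
  have hDcard : Fintype.card D = ∑ k : Fin (r + 1), (Fintype.card (Fin (k : ℕ) ↪ Fin m)) *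
      ((Fintype.card F) ^ ((k : ℕ) * n) * (Fintype.card F) ^ ((k : ℕ) * (m - (k : ℕ)))) := by
    rw [Fintype.card_sigma]
    refine Finset.sum_congr rfl (fun k _ => ?_)
    rw [Fintype.card_sigma, Finset.sum_congr rfl (fun σ _ => ?_), Finset.sum_const,
      Finset.card_univ, smul_eq_mul]
    rw [Fintype.card_prod]
    congr 1
    · -- matrices
      rw [Fintype.card_congr
          (⟨fun M => M, fun M => M, fun _ => rfl, fun _ => rfl⟩ :
            Matrix (Fin (k : ℕ)) (Fin n) F ≃ (Fin (k : ℕ) → Fin n → F)),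
        Fintype.card_fun, Fintype.card_fun, Fintype.card_fin, Fintype.card_fin, ← pow_mul,
        Nat.mul_comm n (k : ℕ)]
    · -- constrained matrices
      have hiff : ∀ A : Matrix (Fin m) (Fin (k : ℕ)) F,
          (∀ i, A (σ i) = 0) ↔ (∀ x ∈ Finset.image σ Finset.univ, A x = 0) := by
        intro A
        constructor
        · rintro h x hx
          obtain ⟨i, -, rfl⟩ := Finset.mem_image.mp hx
          exact h i
        · intro h i
          exact h (σ i) (Finset.mem_image.mpr ⟨i, Finset.mem_univ i, rfl⟩)
      rw [Fintype.card_congr (Equiv.subtypeEquivRight hiff)]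
      rw [Fintype.card_congr
          (⟨fun f => ⟨f.1, f.2⟩, fun f => ⟨f.1, f.2⟩, fun _ => rfl, fun _ => rfl⟩ :
            {A : Matrix (Fin m) (Fin (k : ℕ)) F // ∀ x ∈ Finset.image σ Finset.univ, A x = 0}
            ≃ {f : Fin m → (Fin (k : ℕ) → F) // ∀ x ∈ Finset.image σ Finset.univ, f x = 0})]
      rw [card_fixzero, Finset.card_image_of_injective _ σ.injective, Finset.card_univ,
        Fintype.card_fin, Fintype.card_fin, Fintype.card_fun, Fintype.card_fin, ← pow_mul]
  rw [hDcard]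
  have hbound : ∀ k : Fin (r + 1), (Fintype.card (Fin (k : ℕ) ↪ Fin m)) *
      ((Fintype.card F) ^ ((k : ℕ) * n) * (Fintype.card F) ^ ((k : ℕ) * (m - (k : ℕ))))
      ≤ m ^ r * (Fintype.card F) ^ (r * n + r * (m - r)) := by
    intro k
    have hkr : (k : ℕ) ≤ r := Nat.lt_succ_iff.mp k.isLt
    have h1 : Fintype.card (Fin (k : ℕ) ↪ Fin m) ≤ m ^ r := by
      rw [Fintype.card_embedding_eq, Fintype.card_fin, Fintype.card_fin]
      exact (Nat.descFactorial_le_pow m (k : ℕ)).trans (Nat.pow_le_pow_right hm hkr)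
    have h2 : (Fintype.card F) ^ ((k : ℕ) * n) * (Fintype.card F) ^ ((k : ℕ) * (m - (k : ℕ)))
        ≤ (Fintype.card F) ^ (r * n + r * (m - r)) := by
      rw [← pow_add]
      refine Nat.pow_le_pow_right hq1 ?_
      have hkm : (k : ℕ) ≤ m := le_trans hkr (le_trans hrn hnm)
      have hrm : r ≤ m := le_trans hrn hnm
      zify [hkm, hrm]
      nlinarith [mul_nonneg (by omega : (0:ℤ) ≤ (r : ℤ) - (k : ℕ))
        (by omega : (0:ℤ) ≤ (n : ℤ) + m - r - (k : ℕ))]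
    calc _ ≤ (m ^ r) * ((Fintype.card F) ^ (r * n + r * (m - r))) :=
          Nat.mul_le_mul h1 h2
      _ = _ := rfl
  calc ∑ k : Fin (r + 1), (Fintype.card (Fin (k : ℕ) ↪ Fin m)) *
        ((Fintype.card F) ^ ((k : ℕ) * n) * (Fintype.card F) ^ ((k : ℕ) * (m - (k : ℕ))))
      ≤ ∑ _k : Fin (r + 1), m ^ r * (Fintype.card F) ^ (r * n + r * (m - r)) :=
        Finset.sum_le_sum (fun k _ => hbound k)
    _ = (r + 1) * m ^ r * (Fintype.card F) ^ (r * n + r * (m - r)) := by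
        rw [Finset.sum_const, Finset.card_univ, Fintype.card_fin, smul_eq_mul, mul_assoc]



/-- A random rank-metric code of rate `R = (1−ρ)(1−bρ) − ε` (each matrix included
independently with probability `q^{(R−1)mn}`) is `(ρ, O(1/ε))` list-decodable with
probability at least `1 − q^{−Θ(mn)}`, for `m, n` sufficiently large compared to
`1/ε`. The probability of failure is expressed as a Bernoulli-weighted sum over
all codes `C`. -/
theorem random_code_list_decodable (q : ℕ) (F : Type) [Field F] [Fintype F]
    (hq : Fintype.card F = q) (ρ : ℝ) (hρ : ρ ∈ Set.Ioo (0 : ℝ) 1) :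
    ∃ K : ℝ, 0 < K ∧ ∃ c : ℝ, 0 < c ∧ ∀ ε : ℝ, 0 < ε → ∃ N : ℕ,
      ∀ n m : ℕ, N ≤ n → n ≤ m →
        (∑ C : Finset (Matrix (Fin m) (Fin n) F),
            (if ¬ (∀ X : Matrix (Fin m) (Fin n) F,
                    ((C.filter (fun Y => (X - Y).rank ≤ ⌊ρ * n⌋₊)).card : ℝ) ≤ K / ε)
             then
               ((q : ℝ) ^ ((((1 - ρ) * (1 - ((n : ℝ) / m) * ρ) - ε) - 1) *
                   (m : ℝ) * n)) ^ C.card *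
                 (1 - (q : ℝ) ^ ((((1 - ρ) * (1 - ((n : ℝ) / m) * ρ) - ε) - 1) *
                   (m : ℝ) * n)) ^ (Fintype.card (Matrix (Fin m) (Fin n) F) - C.card)
             else 0)) ≤
          (q : ℝ) ^ (-(c * ((m : ℝ) * n))) := by
  obtain ⟨hρ0, hρ1⟩ := hρ
  refine ⟨3, by norm_num, 1, by norm_num, ?_⟩
  intro ε hε
  set L : ℕ := ⌊3 / ε⌋₊ with hL
  set s : ℕ := L + 1 with hs
  have h2 : Filter.Tendsto (fun k : ℕ => (k : ℝ) ^ s / 2 ^ k) Filter.atTop (nhds 0) :=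
    tendsto_pow_const_div_const_pow_of_one_lt s (by norm_num)
  have hδ : (0 : ℝ) < (1 / 2) ^ s := by positivity
  obtain ⟨N₁, hN₁⟩ := Filter.eventually_atTop.mp (h2.eventually (gt_mem_nhds hδ))
  refine ⟨max N₁ (L + 2), ?_⟩
  intro n m hn hnm
  have hn2 : L + 2 ≤ n := le_trans (le_max_right _ _) hn
  have hN₁m : N₁ ≤ m := le_trans (le_trans (le_max_left _ _) hn) hnm
  have hn1 : 1 ≤ n := by omega
  have hm1 : 1 ≤ m := le_trans hn1 hnm
  have hq2 : 2 ≤ q := by rw [← hq]; exact Fintype.one_lt_card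
  have hQ1 : (1 : ℝ) < (q : ℝ) := by exact_mod_cast by omega
  have hQ0 : (0 : ℝ) < (q : ℝ) := by linarith
  have hm0 : (0 : ℝ) < (m : ℝ) := by exact_mod_cast hm1
  have hn0 : (0 : ℝ) < (n : ℝ) := by exact_mod_cast hn1
  set r : ℕ := ⌊ρ * (n : ℝ)⌋₊ with hr
  set E : ℝ := (((1 - ρ) * (1 - ((n : ℝ) / m) * ρ) - ε) - 1) * (m : ℝ) * n with hE
  set P : ℝ := (q : ℝ) ^ E with hP
  have hb0 : (0 : ℝ) ≤ (n : ℝ) / m := by positivity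
  have hb1 : (n : ℝ) / m ≤ 1 := by
    rw [div_le_one hm0]; exact_mod_cast hnm
  have h1R : (1 - ρ) * (1 - ((n : ℝ) / m) * ρ) ≤ 1 := by
    nlinarith [mul_nonneg (by linarith : (0:ℝ) ≤ 1 - ρ) (mul_nonneg hb0 hρ0.le)]
  have hEneg : E ≤ 0 := by
    have h3 : (1 - ρ) * (1 - ((n : ℝ) / m) * ρ) - ε - 1 ≤ 0 := by linarith
    rw [hE]
    nlinarith [mul_nonneg (neg_nonneg.2 h3) (mul_pos hm0 hn0).le]
  have hP0 : 0 ≤ P := Real.rpow_nonneg hQ0.le _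
  have hP1 : P ≤ 1 := Real.rpow_le_one_of_one_le_of_nonpos hQ1.le hEneg
  have hw : ∀ C : Finset (Matrix (Fin m) (Fin n) F),
      0 ≤ P ^ C.card * (1 - P) ^ (Fintype.card (Matrix (Fin m) (Fin n) F) - C.card) :=
    fun C => mul_nonneg (pow_nonneg hP0 _) (pow_nonneg (by linarith) _)
  have hrn : r ≤ n := by
    rw [hr]
    calc ⌊ρ * (n : ℝ)⌋₊ ≤ ⌊((n : ℕ) : ℝ)⌋₊ := Nat.floor_le_floor (by nlinarith)
      _ = n := Nat.floor_natCast n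
  have hrm : r ≤ m := hrn.trans hnm
  set re : ℕ := r * n + r * (m - r) with hre
  set Vb : ℕ := (r + 1) * m ^ r * q ^ re with hVbdef
  -- step 1 : pointwise union bound over X
  have step1 : ∀ C : Finset (Matrix (Fin m) (Fin n) F),
      (if ¬ (∀ X : Matrix (Fin m) (Fin n) F,
          ((C.filter (fun Y => (X - Y).rank ≤ r)).card : ℝ) ≤ 3 / ε)
       then P ^ C.card * (1 - P) ^ (Fintype.card (Matrix (Fin m) (Fin n) F) - C.card) else 0)
      ≤ ∑ X : Matrix (Fin m) (Fin n) F,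
          (if s ≤ (C.filter (fun Y => (X - Y).rank ≤ r)).card
           then P ^ C.card * (1 - P) ^ (Fintype.card (Matrix (Fin m) (Fin n) F) - C.card)
           else 0) := by
    intro C
    by_cases hbad : ∀ X : Matrix (Fin m) (Fin n) F,
        ((C.filter (fun Y => (X - Y).rank ≤ r)).card : ℝ) ≤ 3 / ε
    · rw [if_neg (not_not_intro hbad)]
      refine Finset.sum_nonneg fun X _ => ?_
      split_ifs with h
      exacts [hw C, le_rfl]
    · rw [if_pos hbad]
      push_neg at hbad
      obtain ⟨X₀, hX₀⟩ := hbad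
      have hcard : s ≤ (C.filter (fun Y => (X₀ - Y).rank ≤ r)).card := by
        have h1 : (L : ℝ) ≤ 3 / ε := Nat.floor_le (by positivity)
        have h2 : (L : ℝ) < ((C.filter (fun Y => (X₀ - Y).rank ≤ r)).card : ℝ) :=
          lt_of_le_of_lt h1 hX₀
        have h3 := Nat.cast_lt.mp h2
        omega
      calc P ^ C.card * (1 - P) ^ (Fintype.card (Matrix (Fin m) (Fin n) F) - C.card)
          = (if s ≤ (C.filter (fun Y => (X₀ - Y).rank ≤ r)).card
             then P ^ C.card * (1 - P) ^ (Fintype.card (Matrix (Fin m) (Fin n) F) - C.card)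
             else 0) := (if_pos hcard).symm
        _ ≤ _ := Finset.single_le_sum
              (f := fun X : Matrix (Fin m) (Fin n) F =>
                (if s ≤ (C.filter (fun Y => (X - Y).rank ≤ r)).card
                 then P ^ C.card * (1 - P) ^ (Fintype.card (Matrix (Fin m) (Fin n) F) - C.card)
                 else 0))
              (fun X _ => by split_ifs with h; exacts [hw C, le_rfl]) (Finset.mem_univ X₀)
  -- step 3 : per-center bound via subsets of the ball
  have step3 : ∀ X : Matrix (Fin m) (Fin n) F,
      (∑ C : Finset (Matrix (Fin m) (Fin n) F),
        (if s ≤ (C.filter (fun Y => (X - Y).rank ≤ r)).card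
         then P ^ C.card * (1 - P) ^ (Fintype.card (Matrix (Fin m) (Fin n) F) - C.card)
         else 0))
      ≤ ((Finset.univ.filter (fun Y : Matrix (Fin m) (Fin n) F => (X - Y).rank ≤ r)).card.choose s : ℝ)
          * P ^ s := by
    intro X
    set B : Finset (Matrix (Fin m) (Fin n) F) :=
      Finset.univ.filter (fun Y : Matrix (Fin m) (Fin n) F => (X - Y).rank ≤ r) with hB
    have swap : (∑ C : Finset (Matrix (Fin m) (Fin n) F),
        (if s ≤ (C.filter (fun Y => (X - Y).rank ≤ r)).card
         then P ^ C.card * (1 - P) ^ (Fintype.card (Matrix (Fin m) (Fin n) F) - C.card)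
         else 0))
        ≤ ∑ C : Finset (Matrix (Fin m) (Fin n) F), ∑ S ∈ B.powersetCard s,
            (if S ⊆ C
             then P ^ C.card * (1 - P) ^ (Fintype.card (Matrix (Fin m) (Fin n) F) - C.card)
             else 0) := by
      refine Finset.sum_le_sum fun C _ => ?_
      by_cases h : s ≤ (C.filter (fun Y => (X - Y).rank ≤ r)).card
      · rw [if_pos h]
        obtain ⟨S, hSsub, hScard⟩ := Finset.exists_subset_card_eq h
        have hSmem : S ∈ B.powersetCard s := Finset.mem_powersetCard.mpr
          ⟨hSsub.trans (Finset.filter_subset_filter _ (Finset.subset_univ C)), hScard⟩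
        have hSC : S ⊆ C := hSsub.trans (Finset.filter_subset _ _)
        calc P ^ C.card * (1 - P) ^ (Fintype.card (Matrix (Fin m) (Fin n) F) - C.card)
            = (if S ⊆ C
               then P ^ C.card * (1 - P) ^ (Fintype.card (Matrix (Fin m) (Fin n) F) - C.card)
               else 0) := (if_pos hSC).symm
          _ ≤ _ := Finset.single_le_sum
                (f := fun S' : Finset (Matrix (Fin m) (Fin n) F) =>
                  (if S' ⊆ C
                   then P ^ C.card * (1 - P) ^ (Fintype.card (Matrix (Fin m) (Fin n) F) - C.card)
                   else 0))
                (fun S' _ => by split_ifs with h'; exacts [hw C, le_rfl]) hSmem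
      · rw [if_neg h]
        refine Finset.sum_nonneg fun S _ => ?_
        split_ifs with h'
        exacts [hw C, le_rfl]
    refine swap.trans (le_of_eq ?_)
    rw [Finset.sum_comm]
    have hterm : ∀ S ∈ B.powersetCard s,
        (∑ C : Finset (Matrix (Fin m) (Fin n) F),
          (if S ⊆ C
           then P ^ C.card * (1 - P) ^ (Fintype.card (Matrix (Fin m) (Fin n) F) - C.card)
           else 0)) = P ^ s := by
      intro S hS
      rw [bern_upset, (Finset.mem_powersetCard.mp hS).2]
    rw [Finset.sum_congr rfl hterm, Finset.sum_const, Finset.card_powersetCard, nsmul_eq_mul]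
  -- ball size bound
  have hball : ∀ X : Matrix (Fin m) (Fin n) F,
      (Finset.univ.filter (fun Y : Matrix (Fin m) (Fin n) F => (X - Y).rank ≤ r)).card ≤ Vb := by
    intro X
    have hcardeq : (Finset.univ.filter (fun Y : Matrix (Fin m) (Fin n) F => (X - Y).rank ≤ r)).card
        = (Finset.univ.filter (fun M : Matrix (Fin m) (Fin n) F => M.rank ≤ r)).card := by
      refine Finset.card_nbij' (fun Y => X - Y) (fun M => X - M) ?_ ?_ ?_ ?_
      · intro a ha
        simp only [Finset.mem_coe, Finset.mem_filter, Finset.mem_univ, true_and] at ha ⊢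
        exact ha
      · intro a ha
        simp only [Finset.mem_coe, Finset.mem_filter, Finset.mem_univ, true_and] at ha ⊢
        rwa [sub_sub_cancel]
      · intro a _
        exact sub_sub_cancel X a
      · intro a _
        exact sub_sub_cancel X a
    rw [hcardeq, hVbdef, hre, ← hq]
    exact rank_count F m n r hrn hnm hm1
  -- step 4 : bound each center's contribution
  have step4 : ∀ X : Matrix (Fin m) (Fin n) F,
      ((Finset.univ.filter (fun Y : Matrix (Fin m) (Fin n) F => (X - Y).rank ≤ r)).card.choose s : ℝ)
          * P ^ s ≤ ((Vb : ℝ)) ^ s * P ^ s := by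
    intro X
    refine mul_le_mul_of_nonneg_right ?_ (pow_nonneg hP0 s)
    have h1 : (Finset.univ.filter (fun Y : Matrix (Fin m) (Fin n) F => (X - Y).rank ≤ r)).card.choose s
        ≤ Vb ^ s :=
      (Nat.choose_le_pow _ s).trans (Nat.pow_le_pow_left (hball X) s)
    calc ((Finset.univ.filter (fun Y : Matrix (Fin m) (Fin n) F => (X - Y).rank ≤ r)).card.choose s : ℝ)
        ≤ ((Vb ^ s : ℕ) : ℝ) := Nat.cast_le.mpr h1
      _ = ((Vb : ℝ)) ^ s := by push_cast; ring
  -- counting all matrices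
  have hcardM : Fintype.card (Matrix (Fin m) (Fin n) F) = q ^ (m * n) := by
    rw [← hq, Fintype.card_congr
        (⟨fun M => M, fun M => M, fun _ => rfl, fun _ => rfl⟩ :
          Matrix (Fin m) (Fin n) F ≃ (Fin m → Fin n → F)),
      Fintype.card_fun, Fintype.card_fun, Fintype.card_fin, Fintype.card_fin, ← pow_mul,
      Nat.mul_comm n m]
  -- polynomial-factor bound
  have hgrow : ((2 : ℝ) * m) ^ s ≤ (2 : ℝ) ^ m := by
    have h := hN₁ m hN₁m
    have h2m : (0 : ℝ) < 2 ^ m := by positivity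
    have hms : (m : ℝ) ^ s < (1 / 2) ^ s * 2 ^ m := (div_lt_iff₀ h2m).mp h
    calc ((2 : ℝ) * m) ^ s = 2 ^ s * (m : ℝ) ^ s := mul_pow 2 _ s
      _ ≤ 2 ^ s * ((1 / 2) ^ s * 2 ^ m) :=
          mul_le_mul_of_nonneg_left hms.le (by positivity)
      _ = ((2 : ℝ) * (1 / 2)) ^ s * 2 ^ m := by rw [mul_pow]; ring
      _ = (2 : ℝ) ^ m := by norm_num
  have hpoly : (((r + 1) * m ^ r : ℕ) : ℝ) ^ s ≤ (q : ℝ) ^ (m * n) := by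
    have h1 : ((r + 1) * m ^ r : ℕ) ≤ (2 * m) ^ n := by
      calc (r + 1) * m ^ r ≤ 2 ^ n * m ^ n :=
            Nat.mul_le_mul (by have := @Nat.lt_two_pow_self n; omega)
              (Nat.pow_le_pow_right hm1 hrn)
        _ = (2 * m) ^ n := (Nat.mul_pow 2 m n).symm
    calc (((r + 1) * m ^ r : ℕ) : ℝ) ^ s ≤ (((2 * m) ^ n : ℕ) : ℝ) ^ s :=
          pow_le_pow_left₀ (by positivity) (by exact_mod_cast h1) s
      _ = (((2 : ℝ) * m) ^ s) ^ n := by push_cast; rw [← pow_mul, ← pow_mul, Nat.mul_comm]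
      _ ≤ ((2 : ℝ) ^ m) ^ n := pow_le_pow_left₀ (by positivity) hgrow n
      _ = (2 : ℝ) ^ (m * n) := by rw [← pow_mul]
      _ ≤ (q : ℝ) ^ (m * n) :=
          pow_le_pow_left₀ (by norm_num) (by exact_mod_cast hq2) _
  -- the exponent bookkeeping
  have hsε : 3 < (s : ℝ) * ε := by
    have hfl : 3 / ε < (L : ℝ) + 1 := Nat.lt_floor_add_one (3 / ε)
    have hcast : ((L : ℝ) + 1) = (s : ℝ) := by rw [hs]; push_cast; ring
    calc (3 : ℝ) = (3 / ε) * ε := (div_mul_cancel₀ (3 : ℝ) hε.ne').symm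
      _ < ((L : ℝ) + 1) * ε := mul_lt_mul_of_pos_right hfl hε
      _ = (s : ℝ) * ε := by rw [hcast]
  have hrρ : (r : ℝ) ≤ ρ * n := Nat.floor_le (by positivity)
  have hρn : ρ * (n : ℝ) ≤ n := by nlinarith
  have hmn_c : (n : ℝ) ≤ m := Nat.cast_le.mpr hnm
  have hgeom : (r : ℝ) * n + (r : ℝ) * ((m : ℝ) - r) ≤ ρ * n * ((n : ℝ) + m - ρ * n) := by
    have hr0 : (0 : ℝ) ≤ (r : ℝ) := Nat.cast_nonneg r
    nlinarith [mul_nonneg (sub_nonneg.2 hrρ)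
      (show (0 : ℝ) ≤ (n : ℝ) + m - r - ρ * n by nlinarith)]
  have hEeq : E = -(ρ * (m : ℝ) * n + ρ * (n : ℝ) * n - ρ * ρ * (n : ℝ) * n) - ε * ((m : ℝ) * n) := by
    rw [hE]; field_simp; ring
  have hkey2 : (r : ℝ) * n + (r : ℝ) * ((m : ℝ) - r) + E ≤ -(ε * ((m : ℝ) * n)) := by
    rw [hEeq]; nlinarith [hgeom]
  have key : ((m * n : ℕ) : ℝ) + (((m * n : ℕ) : ℝ) + ((re * s : ℕ) : ℝ) + E * (s : ℝ))
      ≤ -(1 * ((m : ℝ) * n)) := by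
    have hre_cast : ((re * s : ℕ) : ℝ) = ((r : ℝ) * n + (r : ℝ) * ((m : ℝ) - r)) * s := by
      rw [hre]; push_cast [Nat.cast_sub hrm]; ring
    have h5 : (s : ℝ) * ((r : ℝ) * n + (r : ℝ) * ((m : ℝ) - r) + E)
        ≤ (s : ℝ) * (-(ε * ((m : ℝ) * n))) :=
      mul_le_mul_of_nonneg_left hkey2 (Nat.cast_nonneg s)
    have h6 : (0 : ℝ) ≤ ((s : ℝ) * ε - 3) * ((m : ℝ) * n) :=
      mul_nonneg (by linarith) (by positivity)
    rw [hre_cast]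
    push_cast at h5 h6 ⊢
    nlinarith [h5, h6]
  have hPs : P ^ s = (q : ℝ) ^ (E * (s : ℝ)) := by
    rw [hP, ← Real.rpow_natCast ((q : ℝ) ^ E) s, ← Real.rpow_mul hQ0.le]
  have e1 : (q : ℝ) ^ (m * n) = (q : ℝ) ^ (((m * n : ℕ)) : ℝ) := (Real.rpow_natCast _ _).symm
  have e2 : ((q : ℝ) ^ re) ^ s = (q : ℝ) ^ (((re * s : ℕ)) : ℝ) := by
    rw [← pow_mul]; exact (Real.rpow_natCast _ _).symm
  -- putting everything together
  calc (∑ C : Finset (Matrix (Fin m) (Fin n) F),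
        (if ¬ (∀ X : Matrix (Fin m) (Fin n) F,
                ((C.filter (fun Y => (X - Y).rank ≤ r)).card : ℝ) ≤ 3 / ε)
         then P ^ C.card * (1 - P) ^ (Fintype.card (Matrix (Fin m) (Fin n) F) - C.card)
         else 0))
      ≤ ∑ C : Finset (Matrix (Fin m) (Fin n) F), ∑ X : Matrix (Fin m) (Fin n) F,
          (if s ≤ (C.filter (fun Y => (X - Y).rank ≤ r)).card
           then P ^ C.card * (1 - P) ^ (Fintype.card (Matrix (Fin m) (Fin n) F) - C.card)
           else 0) := Finset.sum_le_sum fun C _ => step1 C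
    _ = ∑ X : Matrix (Fin m) (Fin n) F, ∑ C : Finset (Matrix (Fin m) (Fin n) F),
          (if s ≤ (C.filter (fun Y => (X - Y).rank ≤ r)).card
           then P ^ C.card * (1 - P) ^ (Fintype.card (Matrix (Fin m) (Fin n) F) - C.card)
           else 0) := Finset.sum_comm
    _ ≤ ∑ X : Matrix (Fin m) (Fin n) F,
          ((Finset.univ.filter (fun Y : Matrix (Fin m) (Fin n) F => (X - Y).rank ≤ r)).card.choose s : ℝ)
            * P ^ s := Finset.sum_le_sum fun X _ => step3 X
    _ ≤ ∑ _X : Matrix (Fin m) (Fin n) F, ((Vb : ℝ)) ^ s * P ^ s :=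
        Finset.sum_le_sum fun X _ => step4 X
    _ = (Fintype.card (Matrix (Fin m) (Fin n) F) : ℝ) * ((Vb : ℝ) ^ s * P ^ s) := by
        rw [Finset.sum_const, Finset.card_univ, nsmul_eq_mul]
    _ = (q : ℝ) ^ (m * n) * ((((r + 1) * m ^ r : ℕ) : ℝ) ^ s * ((q : ℝ) ^ re) ^ s * P ^ s) := by
        rw [hcardM]
        have hc1 : ((q ^ (m * n) : ℕ) : ℝ) = (q : ℝ) ^ (m * n) := by push_cast; ring
        have hVbcast : ((Vb : ℕ) : ℝ) = (((r + 1) * m ^ r : ℕ) : ℝ) * (q : ℝ) ^ re := by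
          rw [hVbdef]; push_cast; ring
        rw [hc1, hVbcast, mul_pow]
    _ ≤ (q : ℝ) ^ (m * n) * ((q : ℝ) ^ (m * n) * ((q : ℝ) ^ re) ^ s * P ^ s) := by
        gcongr
    _ = (q : ℝ) ^ (((m * n : ℕ)) : ℝ) *
          ((q : ℝ) ^ (((m * n : ℕ)) : ℝ) * (q : ℝ) ^ (((re * s : ℕ)) : ℝ) *
            (q : ℝ) ^ (E * (s : ℝ))) := by rw [hPs, e1, e2]
    _ = (q : ℝ) ^ (((m * n : ℕ) : ℝ) + (((m * n : ℕ) : ℝ) + ((re * s : ℕ) : ℝ) + E * (s : ℝ))) := by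
        rw [← Real.rpow_add hQ0, ← Real.rpow_add hQ0, ← Real.rpow_add hQ0]
    _ ≤ (q : ℝ) ^ (-(1 * ((m : ℝ) * n))) := Real.rpow_le_rpow_of_exponent_le hQ1.le key
end

section
/- Let ε > 0, n ≤ m, b = n/m. A random code C ⊆ F_q^{m×n} of rate R = (ε − εb + ε²b)/2 (each matrix included independently with probability q^{(R−1)mn}) is (1−ε, ⌈4/(ε − εb + ε²b)⌉ − 1) list-decodable with probability 1 − q^{−Θ(mn)} for sufficiently large m, n. -/
open scoped Classical
open Matrix

lemma sum_bern_pow (p : ℝ) {Ω : Type*} [DecidableEq Ω] (s : Finset Ω) :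
    ∑ t ∈ s.powerset, p ^ t.card * (1 - p) ^ (s.card - t.card) = 1 := by
  have h := Finset.prod_add (fun _ : Ω => p) (fun _ : Ω => (1 - p)) s
  simp only [Finset.prod_const] at h
  have hpp : p + (1 - p) = 1 := by ring
  rw [hpp, one_pow] at h
  rw [Finset.sum_congr rfl (fun t ht => ?_), ← h]
  rw [Finset.card_sdiff_of_subset (Finset.mem_powerset.mp ht)]

lemma sum_bern_subset {Ω : Type*} [Fintype Ω] [DecidableEq Ω] (p : ℝ) (S : Finset Ω) :
    (∑ C : Finset Ω,
      (if S ⊆ C then p ^ C.card * (1 - p) ^ (Fintype.card Ω - C.card) else 0))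
      = p ^ S.card := by
  rw [← Finset.sum_filter]
  have key : ∑ C ∈ Finset.univ.filter (fun C => S ⊆ C),
      p ^ C.card * (1 - p) ^ (Fintype.card Ω - C.card)
      = ∑ T ∈ (Finset.univ \ S).powerset,
        p ^ S.card * (p ^ T.card * (1 - p) ^ ((Finset.univ \ S).card - T.card)) := by
    refine Finset.sum_nbij' (fun C => C \ S) (fun T => S ∪ T) ?_ ?_ ?_ ?_ ?_
    · intro C hC
      exact Finset.mem_powerset.mpr (Finset.sdiff_subset_sdiff (Finset.subset_univ _) le_rfl)
    · intro T hT
      simp only [Finset.mem_filter, Finset.mem_univ, true_and]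
      exact Finset.subset_union_left
    · intro C hC
      simp only [Finset.mem_filter, Finset.mem_univ, true_and] at hC
      exact Finset.union_sdiff_of_subset hC
    · intro T hT
      have hT' := Finset.mem_powerset.mp hT
      refine Finset.union_sdiff_cancel_left ?_
      intro x hx1 hx2
      intro a ha
      have h1 := hx1 ha
      have h2 := hT' (hx2 ha)
      simp only [Finset.mem_sdiff] at h2
      exact absurd h1 h2.2
    · intro C hC
      simp only [Finset.mem_filter, Finset.mem_univ, true_and] at hC
      have h1 : S.card ≤ C.card := Finset.card_le_card hC
      have h2 : C.card ≤ Fintype.card Ω := Finset.card_le_univ C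
      have hcs : (C \ S).card = C.card - S.card := Finset.card_sdiff_of_subset hC
      have hus : (Finset.univ \ S).card = Fintype.card Ω - S.card := by
        rw [Finset.card_sdiff_of_subset (Finset.subset_univ _), Finset.card_univ]
      rw [hcs, hus, ← mul_assoc, ← pow_add]
      congr 2
      · omega
      · omega
  rw [key, ← Finset.mul_sum, sum_bern_pow, mul_one]

noncomputable def phiRank (F : Type) [Field F] (m n r : ℕ)
    (x : (Fin r → Fin n) × (Fin (n - r) → Fin n) ×
      Matrix (Fin m) (Fin r) F × Matrix (Fin r) (Fin (n - r)) F) :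
    Matrix (Fin m) (Fin n) F :=
  Matrix.of fun i j =>
    if h : ∃ k, x.1 k = j then x.2.2.1 i h.choose
    else if h2 : ∃ l, x.2.1 l = j then ∑ k, x.2.2.1 i k * x.2.2.2 k h2.choose
    else 0

lemma count_rank_le (F : Type) [Field F] [Fintype F] (m n r : ℕ) (hrn : r ≤ n) :
    (Finset.univ.filter (fun M : Matrix (Fin m) (Fin n) F => M.rank ≤ r)).card
      ≤ n ^ n * Fintype.card F ^ (r * m + r * (n - r)) := by
  have hsub : (Finset.univ.filter (fun M : Matrix (Fin m) (Fin n) F => M.rank ≤ r))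
      ⊆ Finset.image (phiRank F m n r) Finset.univ := by
    intro M hM
    have hrank : M.rank ≤ r := (Finset.mem_filter.mp hM).2
    -- column space considerations
    have hfr : Module.finrank F (Submodule.span F (Set.range Mᵀ)) ≤ r := by
      exact (Matrix.rank_eq_finrank_span_cols M).symm.le.trans hrank
    obtain ⟨s, hs_sub, hs_span, hs_ind⟩ := exists_linearIndependent F (Set.range Mᵀ)
    have hsfin : s.Finite := hs_ind.setFinite
    haveI := hsfin.fintype
    have hscard : s.toFinset.card ≤ r := by
      have h1 := finrank_span_set_eq_card hs_ind
      rw [hs_span] at h1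
      omega
    -- index choices
    have hidx : ∀ x ∈ s, ∃ j : Fin n, Mᵀ j = x := fun x hx => hs_sub hx
    set J0 : Finset (Fin n) :=
      s.toFinset.attach.image (fun x => (hidx x.1 (Set.mem_toFinset.mp x.2)).choose) with hJ0
    have hJ0card : J0.card ≤ r := by
      refine le_trans (le_trans Finset.card_image_le ?_) hscard
      simp
    have hJ0span : ∀ x ∈ s, ∃ j ∈ J0, Mᵀ j = x := by
      intro x hx
      refine ⟨(hidx x hx).choose, ?_, (hidx x hx).choose_spec⟩
      rw [hJ0]
      exact Finset.mem_image.mpr ⟨⟨x, Set.mem_toFinset.mpr hx⟩, Finset.mem_attach _ _, rfl⟩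
    obtain ⟨J, hJ0J, hJuniv, hJcard⟩ :=
      Finset.exists_subsuperset_card_eq (Finset.subset_univ J0) hJ0card
        (by simpa using hrn)
    have hJccard : Jᶜ.card = n - r := by
      rw [Finset.card_compl, hJcard]; simp
    set u : Fin r → Fin n := fun k => J.orderEmbOfFin hJcard k with hu
    set v : Fin (n - r) → Fin n := fun l => Jᶜ.orderEmbOfFin hJccard l with hv
    have huJ : ∀ j, j ∈ J ↔ ∃ k, u k = j := by
      intro j
      constructor
      · intro hj
        have : j ∈ Set.range (J.orderEmbOfFin hJcard) := by
          rw [Finset.range_orderEmbOfFin]; exact hj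
        exact this
      · rintro ⟨k, rfl⟩
        exact Finset.orderEmbOfFin_mem J hJcard k
    have hvJ : ∀ j, j ∉ J → ∃ l, v l = j := by
      intro j hj
      have : j ∈ Set.range (Jᶜ.orderEmbOfFin hJccard) := by
        rw [Finset.range_orderEmbOfFin]
        simpa using hj
      exact this
    -- columns at u span the column space
    have hspanned : ∀ j : Fin n, Mᵀ j ∈ Submodule.span F (Set.range fun k => Mᵀ (u k)) := by
      intro j
      have h1 : Mᵀ j ∈ Submodule.span F (Set.range Mᵀ) :=
        Submodule.subset_span (Set.mem_range_self j)
      rw [← hs_span] at h1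
      have h2 : s ⊆ Set.range fun k => Mᵀ (u k) := by
        intro x hx
        obtain ⟨j', hj', hxe⟩ := hJ0span x hx
        have hj'' : j' ∈ J := hJ0J hj'
        obtain ⟨k, hk⟩ := (huJ j').mp hj''
        exact ⟨k, by show Mᵀ (u k) = x; rw [hk]; exact hxe⟩
      exact Submodule.span_mono h2 (by exact h1)
    have hcoef : ∀ l : Fin (n - r), ∃ c : Fin r → F,
        (∑ k, c k • Mᵀ (u k)) = Mᵀ (v l) := by
      intro l
      have := hspanned (v l)
      rwa [Submodule.mem_span_range_iff_exists_fun] at this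
    refine Finset.mem_image.mpr ⟨⟨u, v, fun i k => M i (u k),
      fun k l => (hcoef l).choose k⟩, Finset.mem_univ _, ?_⟩
    ext i j
    simp only [phiRank, Matrix.of_apply]
    by_cases h : ∃ k, u k = j
    · rw [dif_pos h]
      rw [h.choose_spec]
    · rw [dif_neg h]
      have hjJ : j ∉ J := fun hj => h ((huJ j).mp hj)
      have h2 : ∃ l, v l = j := hvJ j hjJ
      rw [dif_pos h2]
      have hcs := (hcoef h2.choose).choose_spec
      have hthis := congrFun hcs i
      simp only [Finset.sum_apply, Pi.smul_apply, smul_eq_mul, Matrix.transpose_apply] at hthis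
      calc ∑ k, M i (u k) * (hcoef h2.choose).choose k
          = ∑ k, (hcoef h2.choose).choose k * M i (u k) :=
            Finset.sum_congr rfl fun k _ => mul_comm _ _
        _ = M i (v h2.choose) := hthis
        _ = M i j := by rw [h2.choose_spec]
  calc (Finset.univ.filter (fun M : Matrix (Fin m) (Fin n) F => M.rank ≤ r)).card
      ≤ (Finset.image (phiRank F m n r) Finset.univ).card := Finset.card_le_card hsub
    _ ≤ Finset.univ.card := Finset.card_image_le
    _ ≤ n ^ n * Fintype.card F ^ (r * m + r * (n - r)) := by
        rw [Finset.card_univ]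
        have hcm : ∀ a b : ℕ, Fintype.card (Matrix (Fin a) (Fin b) F) = Fintype.card F ^ (a * b) := by
          intro a b
          have : Fintype.card (Matrix (Fin a) (Fin b) F) = Fintype.card (Fin a → Fin b → F) := rfl
          rw [this, Fintype.card_fun, Fintype.card_fun]
          simp [← pow_mul, mul_comm]
        rw [Fintype.card_prod, Fintype.card_prod, Fintype.card_prod, Fintype.card_fun,
          Fintype.card_fun, hcm, hcm]
        simp only [Fintype.card_fin]
        calc n ^ r * (n ^ (n - r) * (Fintype.card F ^ (m * r) * Fintype.card F ^ (r * (n - r))))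
            = n ^ (r + (n - r)) * (Fintype.card F ^ (m * r + r * (n - r))) := by
              rw [pow_add, pow_add]; ring
          _ = n ^ n * Fintype.card F ^ (r * m + r * (n - r)) := by
              rw [Nat.add_sub_cancel' hrn, Nat.mul_comm m r]
        exact le_rfl

lemma ball_card_eq {F : Type} [Field F] [Fintype F] (m n r : ℕ)
    (X : Matrix (Fin m) (Fin n) F) :
    (Finset.univ.filter fun Y : Matrix (Fin m) (Fin n) F => (X - Y).rank ≤ r).card
      = (Finset.univ.filter fun Z : Matrix (Fin m) (Fin n) F => Z.rank ≤ r).card := by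
  apply Finset.card_bij (fun Y _ => X - Y)
  · intro Y hY
    simp only [Finset.mem_filter, Finset.mem_univ, true_and] at hY ⊢
    exact hY
  · intro Y1 h1 Y2 h2 he
    exact sub_right_inj.mp he
  · intro Z hZ
    refine ⟨X - Z, ?_, sub_sub_cancel X Z⟩
    simp only [Finset.mem_filter, Finset.mem_univ, true_and, sub_sub_cancel] at hZ ⊢
    exact hZ

lemma nat_log_le_two_sqrt (n : ℕ) : Nat.log 2 n ≤ 2 * Nat.sqrt n := by
  rcases Nat.eq_zero_or_pos n with h | h
  · simp [h]
  set k := Nat.log 2 n with hk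
  have h1 : 2 ^ k ≤ n := Nat.pow_log_le_self 2 h.ne'
  have h2 : 2 ^ (k / 2) ≤ Nat.sqrt n := by
    refine Nat.le_sqrt.mpr ?_
    calc 2 ^ (k / 2) * 2 ^ (k / 2) = 2 ^ (k / 2 + k / 2) := (pow_add 2 _ _).symm
      _ ≤ 2 ^ k := Nat.pow_le_pow_right (by norm_num) (by omega)
      _ ≤ n := h1
  have h3 : k / 2 < 2 ^ (k / 2) := Nat.lt_two_pow_self
  omega

lemma pow_self_le (n : ℕ) : n ^ n ≤ 2 ^ (n * (Nat.log 2 n + 1)) := by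
  have h1 : n < 2 ^ (Nat.log 2 n + 1) := Nat.lt_pow_succ_log_self (by norm_num) n
  calc n ^ n ≤ (2 ^ (Nat.log 2 n + 1)) ^ n := Nat.pow_le_pow_left h1.le n
    _ = 2 ^ (n * (Nat.log 2 n + 1)) := by rw [← pow_mul, Nat.mul_comm]

set_option maxHeartbeats 4000000 in
/-- Large-radius regime: a random rank-metric code of rate `R = (ε − εb + ε²b)/2`
(each matrix included independently with probability `q^{(R−1)mn}`) is
`(1−ε, ⌈4/(ε − εb + ε²b)⌉ − 1)` list-decodable with probability `1 − q^{−Θ(mn)}`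
for sufficiently large `m, n`. The failure probability is expressed as a
Bernoulli-weighted sum over all codes `C`. -/
theorem random_code_large_radius (q : ℕ) (F : Type) [Field F] [Fintype F]
    (hq : Fintype.card F = q) (ε : ℝ) (hε : ε ∈ Set.Ioo (0 : ℝ) 1) :
    ∃ c : ℝ, 0 < c ∧ ∃ N : ℕ, ∀ n m : ℕ, N ≤ n → n ≤ m →
      (∑ C : Finset (Matrix (Fin m) (Fin n) F),
          (if ¬ (∀ X : Matrix (Fin m) (Fin n) F,
                  ((C.filter (fun Y => (X - Y).rank ≤ ⌊(1 - ε) * n⌋₊)).card : ℝ) ≤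
                    (⌈(4 : ℝ) / (ε - ε * ((n : ℝ) / m) + ε ^ 2 * ((n : ℝ) / m))⌉₊ : ℝ) - 1)
           then
             ((q : ℝ) ^ (((ε - ε * ((n : ℝ) / m) + ε ^ 2 * ((n : ℝ) / m)) / 2 - 1) *
                 (m : ℝ) * n)) ^ C.card *
               (1 - (q : ℝ) ^ (((ε - ε * ((n : ℝ) / m) + ε ^ 2 * ((n : ℝ) / m)) / 2 - 1) *
                 (m : ℝ) * n)) ^ (Fintype.card (Matrix (Fin m) (Fin n) F) - C.card)
           else 0)) ≤
        (q : ℝ) ^ (-(c * ((m : ℝ) * n))) := by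
  obtain ⟨hε0, hε1⟩ := hε
  have hq2 : 2 ≤ q := by rw [← hq]; exact Fintype.one_lt_card
  set K : ℝ := 4 / ε ^ 2 + 1 with hK
  have hKpos : 0 < K := by positivity
  refine ⟨1/2, by norm_num, (⌈6 * K + 6⌉₊ + 1) ^ 2 + 1, ?_⟩
  intro n m hNn hnm
  have hn1 : 1 ≤ n := le_trans (Nat.le_add_left 1 _) hNn
  have hm1 : 1 ≤ m := le_trans hn1 hnm
  have hnR : (1:ℝ) ≤ (n:ℝ) := by exact_mod_cast hn1
  have hmR : (1:ℝ) ≤ (m:ℝ) := by exact_mod_cast hm1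
  have hnmR : (n:ℝ) ≤ (m:ℝ) := by exact_mod_cast hnm
  have hmpos : (0:ℝ) < m := by linarith
  have hnpos : (0:ℝ) < n := by linarith
  set A : ℝ := ε - ε * ((n : ℝ) / m) + ε ^ 2 * ((n : ℝ) / m) with hA
  set p : ℝ := (q : ℝ) ^ ((A / 2 - 1) * (m : ℝ) * (n : ℝ)) with hp
  set r : ℕ := ⌊(1 - ε) * (n : ℝ)⌋₊ with hr
  set L : ℕ := ⌈(4 : ℝ) / A⌉₊ with hL
  have hble : (n:ℝ)/m ≤ 1 := div_le_one_of_le₀ hnmR hmpos.le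
  have hbge : (0:ℝ) ≤ (n:ℝ)/m := by positivity
  have hAe2 : ε ^ 2 ≤ A := by
    rw [hA]
    nlinarith [mul_nonneg (show (0:ℝ) ≤ ε - ε^2 by nlinarith)
      (show (0:ℝ) ≤ 1 - (n:ℝ)/m by linarith)]
  have hApos : 0 < A := lt_of_lt_of_le (by positivity) hAe2
  have hAeps : A ≤ ε := by
    rw [hA]
    nlinarith [mul_nonneg (mul_nonneg hε0.le hbge) (show (0:ℝ) ≤ 1 - ε by linarith)]
  have hq1R : (1:ℝ) < (q:ℝ) := by exact_mod_cast (by omega : 1 < q)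
  have hq0R : (0:ℝ) < (q:ℝ) := by linarith
  have hp0 : 0 ≤ p := (Real.rpow_pos_of_pos hq0R _).le
  have hp1 : p ≤ 1 := by
    refine Real.rpow_le_one_of_one_le_of_nonpos hq1R.le ?_
    have h1 : A / 2 - 1 ≤ 0 := by nlinarith
    have h2 : (A/2 - 1) * (m:ℝ) ≤ 0 := mul_nonpos_iff.mpr (Or.inr ⟨h1, hmpos.le⟩)
    exact mul_nonpos_iff.mpr (Or.inr ⟨h2, hnpos.le⟩)
  have hwnn : ∀ C : Finset (Matrix (Fin m) (Fin n) F),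
      0 ≤ p ^ C.card * (1 - p) ^ (Fintype.card (Matrix (Fin m) (Fin n) F) - C.card) :=
    fun C => mul_nonneg (pow_nonneg hp0 _) (pow_nonneg (by linarith) _)
  have hL4 : (4:ℝ)/A ≤ (L:ℝ) := Nat.le_ceil _
  have hLup : (L:ℝ) ≤ 4/A + 1 := (Nat.ceil_lt_add_one (by positivity)).le
  have hLK : (L:ℝ) ≤ K := by
    refine hLup.trans ?_
    rw [hK]
    have h1 : (4:ℝ)/A ≤ 4/ε^2 :=
      div_le_div_of_nonneg_left (by norm_num) (by positivity) hAe2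
    linarith
  have hL0 : (0:ℝ) ≤ (L:ℝ) := Nat.cast_nonneg _
  have hrle : (r:ℝ) ≤ (1 - ε) * n := Nat.floor_le (by nlinarith)
  have hrn : r ≤ n := by
    have h2 : (r:ℝ) ≤ (n:ℝ) := hrle.trans (by nlinarith)
    exact_mod_cast h2
  have hr0 : (0:ℝ) ≤ (r:ℝ) := Nat.cast_nonneg _
  set gn : ℕ := Nat.log 2 n + 1 with hgn
  set EB : ℕ := n * gn + (r * m + r * (n - r)) with hEB
  -- ball bound
  have hball : ∀ X : Matrix (Fin m) (Fin n) F,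
      (Finset.univ.filter fun Y => (X - Y).rank ≤ r).card ≤ q ^ EB := by
    intro X
    rw [ball_card_eq]
    refine le_trans (count_rank_le F m n r hrn) ?_
    rw [hq, hEB]
    calc n ^ n * q ^ (r*m + r*(n-r))
        ≤ 2 ^ (n * gn) * q ^ (r*m + r*(n-r)) :=
          Nat.mul_le_mul_right _ (pow_self_le n)
      _ ≤ q ^ (n * gn) * q ^ (r*m + r*(n-r)) :=
          Nat.mul_le_mul_right _ (Nat.pow_le_pow_left hq2 _)
      _ = q ^ (n * gn + (r*m + r*(n-r))) := (pow_add q _ _).symm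
  have hcardM : Fintype.card (Matrix (Fin m) (Fin n) F) = q ^ (m * n) := by
    have h0 : Fintype.card (Matrix (Fin m) (Fin n) F)
        = Fintype.card (Fin m → Fin n → F) := rfl
    rw [h0, Fintype.card_fun, Fintype.card_fun, hq, Fintype.card_fin, Fintype.card_fin,
      ← pow_mul, Nat.mul_comm]
  -- Step 1: union bound over the center X and the list S
  have step1 : (∑ C : Finset (Matrix (Fin m) (Fin n) F),
      (if ¬ (∀ X : Matrix (Fin m) (Fin n) F,
          ((C.filter (fun Y => (X - Y).rank ≤ r)).card : ℝ) ≤ (L : ℝ) - 1)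
       then p ^ C.card *
          (1 - p) ^ (Fintype.card (Matrix (Fin m) (Fin n) F) - C.card)
       else 0))
      ≤ ∑ C : Finset (Matrix (Fin m) (Fin n) F), ∑ X : Matrix (Fin m) (Fin n) F,
          ∑ S ∈ (Finset.univ.filter fun Y => (X - Y).rank ≤ r).powersetCard L,
            (if S ⊆ C then p ^ C.card *
              (1 - p) ^ (Fintype.card (Matrix (Fin m) (Fin n) F) - C.card) else 0) := by
    refine Finset.sum_le_sum ?_
    intro C _
    by_cases hC : ∀ X : Matrix (Fin m) (Fin n) F,
        ((C.filter (fun Y => (X - Y).rank ≤ r)).card : ℝ) ≤ (L : ℝ) - 1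
    · rw [if_neg (not_not_intro hC)]
      refine Finset.sum_nonneg fun X _ => Finset.sum_nonneg fun S _ => ?_
      split_ifs
      · exact hwnn C
      · exact le_rfl
    · rw [if_pos hC]
      push_neg at hC
      obtain ⟨X, hX⟩ := hC
      have hLcard : L ≤ (C.filter fun Y => (X - Y).rank ≤ r).card := by
        have h' : (L:ℝ) < ((C.filter fun Y => (X - Y).rank ≤ r).card : ℝ) + 1 := by
          linarith
        have h'' : L < (C.filter fun Y => (X - Y).rank ≤ r).card + 1 := by
          exact_mod_cast h'
        omega
      obtain ⟨S, hSsub, hScard⟩ := Finset.exists_subset_card_eq hLcard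
      have hSC : S ⊆ C := hSsub.trans (Finset.filter_subset _ _)
      have hSmem : S ∈ (Finset.univ.filter fun Y => (X - Y).rank ≤ r).powersetCard L := by
        rw [Finset.mem_powersetCard]
        refine ⟨fun Y hY => ?_, hScard⟩
        simp only [Finset.mem_filter, Finset.mem_univ, true_and]
        exact (Finset.mem_filter.mp (hSsub hY)).2
      calc p ^ C.card * (1 - p) ^ (Fintype.card (Matrix (Fin m) (Fin n) F) - C.card)
          = (if S ⊆ C then p ^ C.card *
              (1 - p) ^ (Fintype.card (Matrix (Fin m) (Fin n) F) - C.card) else 0) := by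
            rw [if_pos hSC]
        _ ≤ ∑ S' ∈ (Finset.univ.filter fun Y => (X - Y).rank ≤ r).powersetCard L,
              (if S' ⊆ C then p ^ C.card *
                (1 - p) ^ (Fintype.card (Matrix (Fin m) (Fin n) F) - C.card) else 0) := by
            refine Finset.single_le_sum (f := fun S' => (if S' ⊆ C then p ^ C.card *
              (1 - p) ^ (Fintype.card (Matrix (Fin m) (Fin n) F) - C.card) else 0))
              (fun S' _ => ?_) hSmem
            split_ifs
            · exact hwnn C
            · exact le_rfl
        _ ≤ ∑ X' : Matrix (Fin m) (Fin n) F,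
              ∑ S' ∈ (Finset.univ.filter fun Y => (X' - Y).rank ≤ r).powersetCard L,
                (if S' ⊆ C then p ^ C.card *
                  (1 - p) ^ (Fintype.card (Matrix (Fin m) (Fin n) F) - C.card) else 0) := by
            refine Finset.single_le_sum (f := fun X' =>
                ∑ S' ∈ (Finset.univ.filter fun Y => (X' - Y).rank ≤ r).powersetCard L,
                  (if S' ⊆ C then p ^ C.card *
                    (1 - p) ^ (Fintype.card (Matrix (Fin m) (Fin n) F) - C.card) else 0))
              (fun X' _ => Finset.sum_nonneg fun S' _ => ?_)
              (Finset.mem_univ X)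
            split_ifs
            · exact hwnn C
            · exact le_rfl
  -- Step 2: swap sums and apply the Bernoulli identity
  have step2 : (∑ C : Finset (Matrix (Fin m) (Fin n) F), ∑ X : Matrix (Fin m) (Fin n) F,
          ∑ S ∈ (Finset.univ.filter fun Y => (X - Y).rank ≤ r).powersetCard L,
            (if S ⊆ C then p ^ C.card *
              (1 - p) ^ (Fintype.card (Matrix (Fin m) (Fin n) F) - C.card) else 0))
      = ∑ X : Matrix (Fin m) (Fin n) F,
          ∑ S ∈ (Finset.univ.filter fun Y => (X - Y).rank ≤ r).powersetCard L,
            p ^ L := by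
    rw [Finset.sum_comm]
    refine Finset.sum_congr rfl fun X _ => ?_
    rw [Finset.sum_comm]
    refine Finset.sum_congr rfl fun S hS => ?_
    have hcard : S.card = L := (Finset.mem_powersetCard.mp hS).2
    rw [← hcard]
    exact sum_bern_subset p S
  -- Step 3: the counting bound
  have step3 : (∑ X : Matrix (Fin m) (Fin n) F,
          ∑ S ∈ (Finset.univ.filter fun Y => (X - Y).rank ≤ r).powersetCard L,
            p ^ L)
      ≤ ((q:ℝ) ^ (m*n)) * (((q:ℝ) ^ EB) ^ L * p ^ L) := by
    have hXbd : ∀ X : Matrix (Fin m) (Fin n) F,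
        (∑ S ∈ (Finset.univ.filter fun Y => (X - Y).rank ≤ r).powersetCard L, p ^ L)
          ≤ ((q:ℝ) ^ EB) ^ L * p ^ L := by
      intro X
      rw [Finset.sum_const, Finset.card_powersetCard]
      have h1 : ((Finset.univ.filter fun Y => (X - Y).rank ≤ r).card.choose L)
          ≤ (q ^ EB) ^ L := by
        refine le_trans (Nat.choose_le_pow _ _) ?_
        exact Nat.pow_le_pow_left (hball X) L
      have h2 : (((Finset.univ.filter fun Y => (X - Y).rank ≤ r).card.choose L : ℕ) : ℝ)
          ≤ ((q:ℝ) ^ EB) ^ L := by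
        have := (Nat.cast_le (α := ℝ)).mpr h1
        push_cast at this
        exact this
      calc ((Finset.univ.filter fun Y => (X - Y).rank ≤ r).card.choose L) • p ^ L
          = (((Finset.univ.filter fun Y => (X - Y).rank ≤ r).card.choose L : ℕ) : ℝ)
              * p ^ L := by rw [nsmul_eq_mul]
        _ ≤ ((q:ℝ) ^ EB) ^ L * p ^ L :=
            mul_le_mul_of_nonneg_right h2 (pow_nonneg hp0 _)
    calc (∑ X : Matrix (Fin m) (Fin n) F,
          ∑ S ∈ (Finset.univ.filter fun Y => (X - Y).rank ≤ r).powersetCard L, p ^ L)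
        ≤ ∑ _X : Matrix (Fin m) (Fin n) F, ((q:ℝ) ^ EB) ^ L * p ^ L :=
          Finset.sum_le_sum fun X _ => hXbd X
      _ = (Fintype.card (Matrix (Fin m) (Fin n) F) : ℝ) * (((q:ℝ) ^ EB) ^ L * p ^ L) := by
          rw [Finset.sum_const, Finset.card_univ, nsmul_eq_mul]
      _ = ((q:ℝ) ^ (m*n)) * (((q:ℝ) ^ EB) ^ L * p ^ L) := by
          rw [hcardM]; push_cast; ring
  -- Step 4: the analytic estimate
  have step4 : ((q:ℝ) ^ (m*n)) * (((q:ℝ) ^ EB) ^ L * p ^ L)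
      ≤ (q : ℝ) ^ (-((1:ℝ)/2 * ((m : ℝ) * n))) := by
    have e1 : ((q:ℝ) ^ (m*n) : ℝ) = (q:ℝ) ^ (((m*n : ℕ) : ℝ)) := by
      rw [Real.rpow_natCast]
    have e2 : (((q:ℝ) ^ EB) ^ L : ℝ) = (q:ℝ) ^ (((EB * L : ℕ) : ℝ)) := by
      rw [← pow_mul, Real.rpow_natCast]
    have e3 : (p ^ L : ℝ) = (q:ℝ) ^ ((A / 2 - 1) * (m : ℝ) * (n : ℝ) * (L:ℝ)) := by
      rw [hp, ← Real.rpow_natCast ((q:ℝ) ^ ((A / 2 - 1) * (m : ℝ) * (n : ℝ))) L,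
        ← Real.rpow_mul hq0R.le]
    rw [e1, e2, e3, ← Real.rpow_add hq0R, ← Real.rpow_add hq0R]
    rw [Real.rpow_le_rpow_left_iff hq1R]
    -- now a pure real-arithmetic inequality
    have hsq : ((Nat.sqrt n : ℝ)) * ((Nat.sqrt n : ℝ)) ≤ (n:ℝ) := by
      exact_mod_cast Nat.sqrt_le n
    have hgs : ((gn : ℕ) : ℝ) ≤ 2 * ((Nat.sqrt n : ℝ)) + 1 := by
      have h := nat_log_le_two_sqrt n
      have h' : ((Nat.log 2 n : ℕ) : ℝ) ≤ 2 * ((Nat.sqrt n : ℝ)) := by exact_mod_cast h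
      rw [hgn]
      push_cast
      linarith
    have hsK : 6 * K + 6 ≤ ((Nat.sqrt n : ℝ)) := by
      have h1 : (⌈6 * K + 6⌉₊ + 1) ^ 2 ≤ n := by omega
      have h2 : ⌈6 * K + 6⌉₊ + 1 ≤ Nat.sqrt n := by
        calc ⌈6 * K + 6⌉₊ + 1 = Nat.sqrt ((⌈6 * K + 6⌉₊ + 1) ^ 2) := (Nat.sqrt_eq' _).symm
          _ ≤ Nat.sqrt n := Nat.sqrt_le_sqrt h1
      have h3 : ((⌈6 * K + 6⌉₊ : ℝ) + 1) ≤ ((Nat.sqrt n : ℝ)) := by exact_mod_cast h2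
      have h4 : 6 * K + 6 ≤ (⌈6 * K + 6⌉₊ : ℝ) := Nat.le_ceil _
      linarith
    have hAmn : A * ((m:ℝ) * n) = ε * ((m:ℝ)*n) - ε * ((n:ℝ)*n) + ε^2 * ((n:ℝ)*n) := by
      have hm0 : (m:ℝ) ≠ 0 := ne_of_gt hmpos
      have hdiv : (n:ℝ)/(m:ℝ)*(m:ℝ) = (n:ℝ) := div_mul_cancel₀ _ hm0
      rw [hA]
      linear_combination ((ε^2*(n:ℝ) - ε*(n:ℝ)) * hdiv)
    have h1 : (r:ℝ)*m + (r:ℝ)*((n:ℝ) - r) + (A/2 - 1)*((m:ℝ)*n)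
        ≤ -(A/2)*((m:ℝ)*n) := by
      have hb1 : (r:ℝ)*m + (r:ℝ)*((n:ℝ) - r)
          ≤ ((1-ε)*n)*m + ((1-ε)*n)*((n:ℝ) - (1-ε)*n) := by
        nlinarith [mul_nonneg (sub_nonneg.mpr hrle)
          (show (0:ℝ) ≤ (m:ℝ) + n - (1-ε)*n - r by nlinarith)]
      have hb2 : ((1-ε)*n)*m + ((1-ε)*n)*((n:ℝ) - (1-ε)*n) + (A/2 - 1)*((m:ℝ)*n)
          = -(A/2)*((m:ℝ)*n) := by
        have hInv : (m:ℝ) * (m:ℝ)⁻¹ = 1 := mul_inv_cancel₀ (ne_of_gt hmpos)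
        linear_combination (-1 : ℝ) * hAmn + (2*ε^2*(n:ℝ)^2 - 2*ε*(n:ℝ)^2) * hInv
      linarith
    have h2 : (L:ℝ) * (-(A/2) * ((m:ℝ)*n)) ≤ -2*((m:ℝ)*n) := by
      have hx : (4/A) * ((A/2)*((m:ℝ)*n)) ≤ (L:ℝ) * ((A/2)*((m:ℝ)*n)) :=
        mul_le_mul_of_nonneg_right hL4 (by positivity)
      have hy : (4/A) * ((A/2)*((m:ℝ)*n)) = 2*((m:ℝ)*n) := by field_simp; ring
      nlinarith
    have h3 : (L:ℝ) * ((n:ℝ) * (gn:ℝ)) ≤ 1/2 * ((m:ℝ)*n) := by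
      have hs1 : 1 ≤ ((Nat.sqrt n : ℝ)) := by linarith
      have hg3 : ((gn : ℕ) : ℝ) ≤ 3 * ((Nat.sqrt n : ℝ)) := by linarith
      have hm6 : (6*K + 6) * ((Nat.sqrt n : ℝ)) ≤ (m:ℝ) := by
        nlinarith [mul_le_mul_of_nonneg_right hsK (show (0:ℝ) ≤ ((Nat.sqrt n : ℝ)) by linarith)]
      have hLg : (L:ℝ) * (gn:ℝ) ≤ (m:ℝ)/2 := by
        have hKg : (L:ℝ) * (gn:ℝ) ≤ K * (3 * ((Nat.sqrt n : ℝ))) := by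
          have := mul_le_mul hLK hg3 (Nat.cast_nonneg _) hKpos.le
          linarith
        nlinarith
      nlinarith
    -- final combination
    have hfin1 : (L:ℝ) * ((r:ℝ)*m + (r:ℝ)*((n:ℝ) - r) + (A/2 - 1)*((m:ℝ)*n))
        ≤ -2*((m:ℝ)*n) := by
      calc (L:ℝ) * ((r:ℝ)*m + (r:ℝ)*((n:ℝ) - r) + (A/2 - 1)*((m:ℝ)*n))
          ≤ (L:ℝ) * (-(A/2)*((m:ℝ)*n)) := mul_le_mul_of_nonneg_left h1 hL0
        _ ≤ -2*((m:ℝ)*n) := h2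
    rw [hgn] at h3
    push_cast at h3
    rw [hEB]
    push_cast [Nat.cast_sub hrn, hgn]
    linarith [hfin1, h3]
  calc (∑ C : Finset (Matrix (Fin m) (Fin n) F),
      (if ¬ (∀ X : Matrix (Fin m) (Fin n) F,
          ((C.filter (fun Y => (X - Y).rank ≤ r)).card : ℝ) ≤ (L : ℝ) - 1)
       then p ^ C.card *
          (1 - p) ^ (Fintype.card (Matrix (Fin m) (Fin n) F) - C.card)
       else 0))
      ≤ ∑ C : Finset (Matrix (Fin m) (Fin n) F), ∑ X : Matrix (Fin m) (Fin n) F,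
          ∑ S ∈ (Finset.univ.filter fun Y => (X - Y).rank ≤ r).powersetCard L,
            (if S ⊆ C then p ^ C.card *
              (1 - p) ^ (Fintype.card (Matrix (Fin m) (Fin n) F) - C.card) else 0) := step1
    _ = ∑ X : Matrix (Fin m) (Fin n) F,
          ∑ S ∈ (Finset.univ.filter fun Y => (X - Y).rank ≤ r).powersetCard L,
            p ^ L := step2
    _ ≤ ((q:ℝ) ^ (m*n)) * (((q:ℝ) ^ EB) ^ L * p ^ L) := step3
    _ ≤ (q : ℝ) ^ (-((1:ℝ)/2 * ((m : ℝ) * n))) := step4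
end

section
/- For n ≤ m, 0 < δ < 1, and ρ ∈ (0,1), the ratio |B_R(0,(1−δ)ρ)| / |B_R(0,ρ)| is at most q^{−c·nm} for some constant c > 0 depending only on δ and ρ (for sufficiently large n, m). -/
/-!
A matrix of rank at most `k` is determined by `k` columns spanning its column space, the entries of
those columns, and the coefficients expressing the remaining columns through them; hence there are
at most `2 ^ n * q ^ (k * (m + n - k))` such matrices. Conversely, the block matrices
`[A, B; C * A, C * B]` with `A` an invertible `r × r` matrix are pairwise distinct and have rank at
most `r`, so there are at least `q ^ (r * (m + n - r) - r)` matrices of rank at most `r`.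
Between `k = ⌊(1 - δ) ρ n⌋` and `r = ⌊ρ n⌋` the exponent `x * (m + n - x)` grows by
`(r - k) * (m + n - r - k) ≥ (δ ρ n - 1) * (1 - ρ) * m`, which exceeds
`n + r + δ ρ (1 - ρ) n m / 2` as soon as `δ ρ (1 - ρ) n ≥ 6`.
-/

open scoped Classical

open Matrix Fintype

theorem Matrix.natCard_eq_pow {α m n : Type*} [Finite m] [Finite n] :
    Nat.card (Matrix m n α) = Nat.card α ^ (Nat.card m * Nat.card n) := by
  simp [Matrix, Nat.card_fun, pow_mul']

theorem Matrix.exists_finset_card_eq_col_mem_span {K m n : Type*} [Field K] [Fintype n]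
    {X : Matrix m n K} {k : ℕ} (hX : X.rank ≤ k) (hk : k ≤ card n) :
    ∃ J : Finset n, J.card = k ∧
      ∀ j, X.col j ∈ Submodule.span K (Set.range fun i : J => X.col i) := by
  obtain ⟨κ, a, ha, hspan, hli⟩ := exists_linearIndependent' K X.col
  have : Fintype κ := Fintype.ofInjective a ha
  have hcard : (Finset.univ.image a).card ≤ k := by
    rwa [Finset.card_image_of_injective _ ha, Finset.card_univ, ← finrank_span_eq_card hli,
      hspan, ← rank_eq_finrank_span_cols]
  obtain ⟨J, hJ, rfl⟩ := Finset.exists_superset_card_eq hcard hk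
  refine ⟨J, rfl, fun j => ?_⟩
  have hj : X.col j ∈ Submodule.span K (Set.range (X.col ∘ a)) :=
    hspan ▸ Submodule.subset_span (Set.mem_range_self j)
  refine Submodule.span_mono ?_ hj
  rintro _ ⟨i, rfl⟩
  exact ⟨⟨a i, hJ (Finset.mem_image_of_mem a (Finset.mem_univ i))⟩, rfl⟩

section Counting

variable {F m n : Type*} [Field F] [Fintype F] [Fintype m] [Fintype n]

theorem natCard_rank_le_le {k : ℕ} (hk : k ≤ card n) :
    Nat.card {X : Matrix m n F // X.rank ≤ k} ≤
      2 ^ card n * card F ^ (k * (card m + card n - k)) := by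
  let T := Σ J : {J : Finset n // J.card = k}, Matrix m J.1 F × Matrix J.1 ↥J.1ᶜ F
  let ψ : T → Matrix m n F := fun ⟨J, A, C⟩ => Matrix.of fun i j =>
    if h : j ∈ J.1 then A i ⟨j, h⟩ else (A * C) i ⟨j, Finset.mem_compl.2 h⟩
  have hsub : {X : Matrix m n F | X.rank ≤ k} ⊆ Set.range ψ := by
    intro X hX
    obtain ⟨J, hJ, hspan⟩ := exists_finset_card_eq_col_mem_span hX hk
    choose c hc using fun j => (Submodule.mem_span_range_iff_exists_fun F).1 (hspan j)
    refine ⟨⟨⟨J, hJ⟩, X.submatrix id (↑), Matrix.of fun i (j : ↥Jᶜ) => c j i⟩, ?_⟩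
    ext i j
    by_cases h : j ∈ J
    · simp [ψ, h]
    · simpa [ψ, h, mul_apply, Finset.sum_apply, mul_comm] using congrFun (hc j) i
  have hT : Nat.card T = Nat.card {J : Finset n // J.card = k} *
      (card F ^ (card m * k) * card F ^ (k * (card n - k))) := by
    rw [Nat.card_sigma, Finset.sum_const_nat fun J _ => ?_, Finset.card_univ,
      ← Nat.card_eq_fintype_card]
    rw [Nat.card_prod, Matrix.natCard_eq_pow, Matrix.natCard_eq_pow]
    simp [J.2]
  have hJ : Nat.card {J : Finset n // J.card = k} ≤ 2 ^ card n := by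
    rw [Nat.card_eq_fintype_card, ← card_finset]
    exact card_subtype_le _
  calc Nat.card {X : Matrix m n F // X.rank ≤ k}
      ≤ Nat.card T := (Nat.card_mono (Set.toFinite _) hsub).trans (Finite.card_range_le ψ)
    _ ≤ 2 ^ card n * (card F ^ (card m * k) * card F ^ (k * (card n - k))) := by
      rw [hT]; gcongr
    _ = 2 ^ card n * card F ^ (k * (card m + card n - k)) := by
      rw [← pow_add]; congr 2
      zify [hk, hk.trans (Nat.le_add_left _ _)]; ring

theorem pow_le_natCard_GL (r : ℕ) : card F ^ (r * (r - 1)) ≤ Nat.card (GL (Fin r) F) := by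
  have hq : 2 ≤ card F := Fintype.one_lt_card
  rw [Matrix.card_GL_field, pow_mul', ← Fin.prod_const]
  refine Finset.prod_le_prod' fun i _ => Nat.le_sub_of_add_le ?_
  have hi := i.isLt
  calc card F ^ (r - 1) + card F ^ (i : ℕ) ≤ card F ^ (r - 1) + card F ^ (r - 1) := by
        gcongr <;> omega
    _ ≤ card F * card F ^ (r - 1) := by rw [← two_mul]; gcongr
    _ = card F ^ r := by rw [← pow_succ']; congr 1; omega

theorem natCard_GL_mul_le_natCard_rank_le (r : ℕ) (b c : Type*) [Fintype b] [Fintype c] :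
    Nat.card (GL (Fin r) F) * card F ^ (card b * r) * card F ^ (r * card c) ≤
      Nat.card {X : Matrix (Fin r ⊕ b) (Fin r ⊕ c) F // X.rank ≤ r} := by
  let ι : GL (Fin r) F × Matrix b (Fin r) F × Matrix (Fin r) c F →
      {X : Matrix (Fin r ⊕ b) (Fin r ⊕ c) F // X.rank ≤ r} := fun ⟨A, C, B⟩ =>
    ⟨fromRows 1 C * fromCols A B,
      (rank_mul_le_left _ _).trans (by simpa using rank_le_card_width (fromRows 1 C))⟩
  have hι : Function.Injective ι := by
    rintro ⟨A, C, B⟩ ⟨A', C', B'⟩ h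
    simp only [ι, Subtype.mk.injEq, fromRows_mul_fromCols, Matrix.one_mul, fromBlocks_inj] at h
    obtain ⟨hA, hB, hCA, -⟩ := h
    obtain rfl : A = A' := Units.ext hA
    have hC : C = C' := by
      simpa [Matrix.mul_assoc] using congrArg (· * (↑A⁻¹ : Matrix (Fin r) (Fin r) F)) hCA
    rw [hB, hC]
  calc Nat.card (GL (Fin r) F) * card F ^ (card b * r) * card F ^ (r * card c)
      = Nat.card (GL (Fin r) F × Matrix b (Fin r) F × Matrix (Fin r) c F) := by
        rw [Nat.card_prod, Nat.card_prod, Matrix.natCard_eq_pow, Matrix.natCard_eq_pow]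
        simp [mul_assoc]
    _ ≤ _ := Nat.card_le_card_of_injective ι hι

theorem pow_le_natCard_rank_le {r : ℕ} (hrm : r ≤ card m) (hrn : r ≤ card n) :
    card F ^ (r * (r - 1) + (card m - r) * r + r * (card n - r)) ≤
      Nat.card {X : Matrix m n F // X.rank ≤ r} := by
  let em : m ≃ Fin r ⊕ Fin (card m - r) :=
    (equivFin m).trans ((finCongr (by omega)).trans finSumFinEquiv.symm)
  let en : n ≃ Fin r ⊕ Fin (card n - r) :=
    (equivFin n).trans ((finCongr (by omega)).trans finSumFinEquiv.symm)
  rw [Nat.card_congr ((reindex em en).subtypeEquiv (q := fun Y => Y.rank ≤ r) fun X => by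
    rw [rank_reindex]), pow_add, pow_add]
  calc _ ≤ Nat.card (GL (Fin r) F) * card F ^ ((card m - r) * r) * card F ^ (r * (card n - r)) :=
        by gcongr; exact pow_le_natCard_GL r
    _ ≤ _ := by
        simpa using
          natCard_GL_mul_le_natCard_rank_le (F := F) r (Fin (card m - r)) (Fin (card n - r))

theorem natCard_rank_le_le_rpow {k : ℕ} (hk : k ≤ card n) :
    (Nat.card {X : Matrix m n F // X.rank ≤ k} : ℝ) ≤
      (card F : ℝ) ^ ((card n : ℝ) + k * (card m + card n - k)) := by
  have hq : (2 : ℝ) ≤ card F := by exact_mod_cast Fintype.one_lt_card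
  calc (Nat.card {X : Matrix m n F // X.rank ≤ k} : ℝ)
      ≤ (2 ^ card n * card F ^ (k * (card m + card n - k)) : ℕ) := by
        exact_mod_cast natCard_rank_le_le hk
    _ ≤ (card F : ℝ) ^ (card n + k * (card m + card n - k)) := by
        push_cast [Nat.cast_sub (hk.trans le_add_self)]
        rw [pow_add]
        gcongr
    _ = _ := by rw [← Real.rpow_natCast]; push_cast [Nat.cast_sub (hk.trans le_add_self)]; rfl

theorem rpow_le_natCard_rank_le {r : ℕ} (hrm : r ≤ card m) (hrn : r ≤ card n) :
    (card F : ℝ) ^ ((r : ℝ) * (card m + card n - r) - r) ≤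
      Nat.card {X : Matrix m n F // X.rank ≤ r} := by
  have hexp : ((r * (r - 1) + (card m - r) * r + r * (card n - r) : ℕ) : ℝ) =
      r * (card m + card n - r) - r := by
    rw [Nat.mul_sub_one]
    push_cast [Nat.cast_sub (Nat.le_mul_self r), Nat.cast_sub hrm, Nat.cast_sub hrn]
    ring
  rw [← hexp, Real.rpow_natCast]
  exact_mod_cast pow_le_natCard_rank_le hrm hrn

end Counting

theorem rank_exponent_gap {δ ρ n m k r : ℝ} (hδ : 0 < δ) (hρ : ρ ∈ Set.Ioo 0 1)
    (hn : 6 ≤ δ * ρ * (1 - ρ) * n) (hnm : n ≤ m) (hk : k ≤ (1 - δ) * ρ * n)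
    (hr : ρ * n - 1 ≤ r) (hr' : r ≤ ρ * n) :
    n + k * (m + n - k) + δ * ρ * (1 - ρ) / 2 * (n * m) ≤ r * (m + n - r) - r := by
  obtain ⟨hρ0, hρ1⟩ := hρ
  have hc : 0 < δ * ρ * (1 - ρ) := mul_pos (mul_pos hδ hρ0) (sub_pos.2 hρ1)
  have hn0 : 0 ≤ n := (pos_of_mul_pos_right (by linarith) hc.le).le
  have hrk : δ * ρ * n - 1 ≤ r - k := by linarith
  have hmrk : (1 - ρ) * m ≤ m + n - r - k := by
    nlinarith [mul_nonneg hρ0.le (sub_nonneg.2 hnm), mul_nonneg (mul_pos hδ hρ0).le hn0]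
  have hprod : (δ * ρ * n - 1) * ((1 - ρ) * m) ≤ (r - k) * (m + n - r - k) :=
    mul_le_mul hrk hmrk (by nlinarith) (by nlinarith)
  nlinarith

/-- For `n ≤ m`, `0 < δ < 1`, `ρ ∈ (0,1)`, the ratio `|B_R(0,(1−δ)ρ)| / |B_R(0,ρ)|`
is at most `q^{−c·nm}` for some `c > 0` depending only on `δ` and `ρ` (and `q`),
for sufficiently large `n, m`. -/
theorem ball_ratio_bound (q : ℕ) (F : Type) [Field F] [Fintype F]
    (hq : Fintype.card F = q) (δ ρ : ℝ)
    (hδ : δ ∈ Set.Ioo (0 : ℝ) 1) (hρ : ρ ∈ Set.Ioo (0 : ℝ) 1) :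
    ∃ c : ℝ, 0 < c ∧ ∃ N : ℕ, ∀ n m : ℕ, N ≤ n → n ≤ m →
      (Nat.card {X : Matrix (Fin m) (Fin n) F // X.rank ≤ ⌊(1 - δ) * ρ * n⌋₊} : ℝ) ≤
        (q : ℝ) ^ (-(c * ((n : ℝ) * m))) *
          (Nat.card {X : Matrix (Fin m) (Fin n) F // X.rank ≤ ⌊ρ * n⌋₊} : ℝ) := by
  have hc : 0 < δ * ρ * (1 - ρ) := mul_pos (mul_pos hδ.1 hρ.1) (sub_pos.2 hρ.2)
  have hq1 : (1 : ℝ) < q := by rw [← hq]; exact_mod_cast Fintype.one_lt_card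
  refine ⟨δ * ρ * (1 - ρ) / 2, half_pos hc, ⌈6 / (δ * ρ * (1 - ρ))⌉₊, fun n m hNn hnm => ?_⟩
  set k := ⌊(1 - δ) * ρ * n⌋₊
  set r := ⌊ρ * n⌋₊
  have hN : 6 ≤ δ * ρ * (1 - ρ) * n := by
    rw [← div_le_iff₀' hc]
    exact (Nat.le_ceil _).trans (by exact_mod_cast hNn)
  have hkn : k ≤ n := Nat.floor_le_of_le <| mul_le_of_le_one_left n.cast_nonneg <| by
    nlinarith [hδ.1, hρ.1, hρ.2]
  have hrn : r ≤ n := Nat.floor_le_of_le <| mul_le_of_le_one_left n.cast_nonneg hρ.2.le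
  have hgap := rank_exponent_gap hδ.1 hρ hN (Nat.cast_le.2 hnm) (k := k) (r := r)
    (Nat.floor_le (by have := hρ.1; have := sub_pos.2 hδ.2; positivity))
    (Nat.sub_one_lt_floor _).le (Nat.floor_le (by have := hρ.1; positivity))
  calc (Nat.card {X : Matrix (Fin m) (Fin n) F // X.rank ≤ k} : ℝ)
      ≤ (q : ℝ) ^ ((n : ℝ) + k * (m + n - k)) := by
        simpa [hq] using natCard_rank_le_le_rpow (F := F) (m := Fin m) (n := Fin n) (k := k)
          (by simpa using hkn)
    _ ≤ (q : ℝ) ^ (-(δ * ρ * (1 - ρ) / 2 * (n * m)) + (r * (m + n - r) - r)) :=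
        Real.rpow_le_rpow_of_exponent_le hq1.le (by linarith)
    _ ≤ _ := by
        rw [Real.rpow_add (by linarith)]
        gcongr
        simpa [hq] using rpow_le_natCard_rank_le (F := F) (m := Fin m) (n := Fin n) (r := r)
          (by simpa using hrn.trans hnm) (by simpa using hrn)
end
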